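/- arXiv:2112.06744 — 7 statements merged into one kernel-verified Lean document; each statement's English description precedes it below -/
import Mathlib

section
/- Let Γ be a simplicial graph with vertex set {v_1,...,v_d}, let Λ_•(Γ*) be the associated Stanley–Reisner algebra over Z/p (the exterior algebra on the dual basis χ_1,...,χ_d modulo the ideal generated by χ_i ∧ χ_j for non-edges {v_i,v_j}), and let α = χ_1 + ... + χ_d ∈ Λ_1(Γ*). Then the dimension of the subspace Λ_1(Γ*) ∧ α of Λ_2(Γ*) equals d(Γ) − r(Γ), where d(Γ) is the number of vertices and r(Γ) is the number of connected components of Γ. -/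
/-!
Wedging with `α = χ_1 + ⋯ + χ_d` is the graph coboundary `x ↦ (x_i - x_j)_{ij}` from vertex
functions to edge functions. Its kernel consists of the functions that are constant on connected
components, so it has dimension `r(Γ)`, and rank–nullity gives `d(Γ) - r(Γ)` for the image.
-/

/-- The degree-2 part of the Stanley–Reisner algebra `Λ₂(Γ*)` of a finite simplicial
graph `Γ` on vertices `Fin d`, modelled concretely via its canonical basis
`{χ_i ∧ χ_j : i < j, {v_i,v_j} ∈ E}` indexed by ordered edges. -/
abbrev SRdeg2 (p d : ℕ) (Γ : SimpleGraph (Fin d)) : Type :=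
  {e : Fin d × Fin d // e.1 < e.2 ∧ Γ.Adj e.1 e.2} → ZMod p

/-- The wedge (cup) product `Λ₁(Γ*) × Λ₁(Γ*) → Λ₂(Γ*)`, in coordinates:
`(x ∧ y)_{ij} = x_i y_j − x_j y_i` for each edge `{v_i, v_j}`, `i < j`. -/
def SRwedge (p d : ℕ) (Γ : SimpleGraph (Fin d)) (x y : Fin d → ZMod p) :
    SRdeg2 p d Γ :=
  fun e => x e.1.1 * y e.1.2 - x e.1.2 * y e.1.1

namespace SimpleGraph

variable {V : Type*}

theorem Reachable.eq_of_forall_adj_eq {G : SimpleGraph V} {β : Sort*} {f : V → β}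
    (hf : ∀ u v, G.Adj u v → f u = f v) {u v : V} (h : G.Reachable u v) : f u = f v := by
  obtain ⟨w⟩ := h
  induction w with
  | nil => rfl
  | cons hadj _ ih => exact (hf _ _ hadj).trans ih

section Coboundary

variable (G : SimpleGraph V) [LinearOrder V] (R : Type*) [CommRing R]

def coboundary : (V → R) →ₗ[R] ({e : V × V // e.1 < e.2 ∧ G.Adj e.1 e.2} → R) where
  toFun x e := x e.1.1 - x e.1.2
  map_add' x y := by ext; simp only [Pi.add_apply]; ring
  map_smul' c x := by ext; simp only [Pi.smul_apply, smul_eq_mul, RingHom.id_apply]; ring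

variable {G R}

theorem mem_ker_coboundary_iff {x : V → R} :
    x ∈ LinearMap.ker (G.coboundary R) ↔ ∀ u v, G.Adj u v → x u = x v := by
  simp only [LinearMap.mem_ker, funext_iff, coboundary, LinearMap.coe_mk, AddHom.coe_mk,
    Pi.zero_apply, sub_eq_zero, Subtype.forall, Prod.forall]
  refine ⟨fun hx u v huv => ?_, fun hx u v huv => hx u v huv.2⟩
  rcases lt_or_gt_of_ne huv.ne with h | h
  · exact hx u v ⟨h, huv⟩
  · exact (hx v u ⟨h, huv.symm⟩).symm

variable (G R)

theorem ker_coboundary :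
    LinearMap.ker (G.coboundary R) =
      LinearMap.range (LinearMap.funLeft R R G.connectedComponentMk) := by
  ext x
  rw [mem_ker_coboundary_iff, LinearMap.mem_range]
  constructor
  · intro hx
    exact ⟨ConnectedComponent.lift x fun _ _ w _ => w.reachable.eq_of_forall_adj_eq hx, rfl⟩
  · rintro ⟨f, rfl⟩ u v huv
    simp only [LinearMap.funLeft_apply, ConnectedComponent.connectedComponentMk_eq_of_adj huv]

theorem finrank_range_coboundary (K : Type*) [Field K] [Fintype V] :
    Module.finrank K (LinearMap.range (G.coboundary K)) =
      Fintype.card V - Nat.card G.ConnectedComponent := by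
  have hker :
      Module.finrank K (LinearMap.ker (G.coboundary K)) = Nat.card G.ConnectedComponent := by
    rw [ker_coboundary, LinearMap.finrank_range_of_inj
      (LinearMap.funLeft_injective_of_surjective K K G.connectedComponentMk Quot.mk_surjective)]
    simp
  have := LinearMap.finrank_range_add_finrank_ker (G.coboundary K)
  rw [Module.finrank_fintype_fun_eq_card] at this
  omega

end Coboundary

end SimpleGraph

theorem SRwedge_const_one_eq_coboundary (p d : ℕ) (Γ : SimpleGraph (Fin d)) :
    (fun x => SRwedge p d Γ x fun _ => 1) = Γ.coboundary (ZMod p) := by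
  ext x e
  simp [SRwedge, SimpleGraph.coboundary]

/-- For a finite simplicial graph `Γ` with `d` vertices and
`α = χ_1 + ⋯ + χ_d`, the subspace `Λ₁(Γ*) ∧ α` of `Λ₂(Γ*)` has dimension
`d(Γ) − r(Γ)`, where `r(Γ)` is the number of connected components of `Γ`. -/
theorem stmt0 (p d : ℕ) [Fact p.Prime] (Γ : SimpleGraph (Fin d)) :
    Module.finrank (ZMod p)
      (Submodule.span (ZMod p)
        (Set.range fun x : Fin d → ZMod p => SRwedge p d Γ x (fun _ => 1)))
      = d - Nat.card Γ.ConnectedComponent := by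
  rw [SRwedge_const_one_eq_coboundary, ← LinearMap.coe_range, Submodule.span_eq,
    Γ.finrank_range_coboundary, Fintype.card_fin]
end

section
/- Let Γ = (V,E) be a finite simplicial graph with V = {v_1,...,v_d}, fix 1 ≤ m ≤ d, set α = χ_1 + ... + χ_m in Λ_1(Γ*), and let V_0 = Span{χ_{m+1},...,χ_d}. Let V_{0,α} = { v_j : m < j ≤ d, and {v_i,v_j} ∈ E for some 1 ≤ i ≤ m }. Then dim(V_0 ∧ α) = |V_{0,α}|, where V_0 ∧ α = { β ∧ α : β ∈ V_0 } ⊆ Λ_2(Γ*). -/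
/-! Wedging with `α` is linear, so `V₀ ∧ α` is spanned by the forms `χ_j ∧ α`, `j > m`. Such a form
is supported on the edges `{v_i, v_j}` with `i ≤ m`: it vanishes unless `v_j ∈ V_{0,α}`, and the
nonzero ones have pairwise disjoint supports, hence are linearly independent. -/

open Submodule

theorem Submodule.span_setOf_mem_span_eq_span_image {R M N : Type*} [Semiring R]
    [AddCommMonoid M] [AddCommMonoid N] [Module R M] [Module R N] (f : M →ₗ[R] N) (s : Set M) :
    span R {y | ∃ x ∈ span R s, y = f x} = span R (f '' s) := by
  have himage : {y | ∃ x ∈ span R s, y = f x} = f '' span R s := by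
    ext y
    simp [eq_comm]
  rw [himage, ← map_coe, span_eq, map_span]

abbrev SREdge (d : ℕ) (Γ : SimpleGraph (Fin d)) : Type :=
  {e : Fin d × Fin d // e.1 < e.2 ∧ Γ.Adj e.1 e.2}

def SRwedgeRight (p d : ℕ) (Γ : SimpleGraph (Fin d)) (y : Fin d → ZMod p) :
    (Fin d → ZMod p) →ₗ[ZMod p] SRdeg2 p d Γ where
  toFun x := SRwedge p d Γ x y
  map_add' x x' := by funext e; simp only [SRwedge, Pi.add_apply]; ring
  map_smul' c x := by
    funext e; simp only [SRwedge, Pi.smul_apply, smul_eq_mul, RingHom.id_apply]; ring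

theorem SRwedge_single_apply {p d : ℕ} {Γ : SimpleGraph (Fin d)} (j : Fin d)
    (y : Fin d → ZMod p) (e : SREdge d Γ) :
    SRwedge p d Γ (Pi.single j 1) y e
      = (if e.1.1 = j then y e.1.2 else 0) - (if e.1.2 = j then y e.1.1 else 0) := by
  simp only [SRwedge, Pi.single_apply, ite_mul, one_mul, zero_mul]

/-- `χ_1 + ⋯ + χ_m`, with vertices indexed from `0`. -/
abbrev lowerIndicator (p d m : ℕ) : Fin d → ZMod p :=
  fun i => if (i : ℕ) < m then 1 else 0

/-- The vertex set `V_{0,α}`. -/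
abbrev lowerNeighbors (d m : ℕ) (Γ : SimpleGraph (Fin d)) : Type :=
  {j : Fin d // m ≤ (j : ℕ) ∧ ∃ i : Fin d, (i : ℕ) < m ∧ Γ.Adj i j}

section LowerIndicator

variable {p d m : ℕ} {Γ : SimpleGraph (Fin d)}

/-- An edge `(j, j')` contributes nothing, as `α` vanishes at `j' > j ≥ m`. -/
theorem SRwedge_single_lowerIndicator_apply {j : Fin d} (hj : m ≤ (j : ℕ)) (e : SREdge d Γ) :
    SRwedge p d Γ (Pi.single j 1) (lowerIndicator p d m) e
      = if e.1.2 = j ∧ (e.1.1 : ℕ) < m then -1 else 0 := by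
  have hlt : (e.1.1 : ℕ) < e.1.2 := e.2.1
  rw [SRwedge_single_apply]
  by_cases h2 : e.1.2 = j
  · have h1 : e.1.1 ≠ j := fun h => by rw [h, h2] at hlt; exact lt_irrefl _ hlt
    by_cases h : (e.1.1 : ℕ) < m <;> simp [h1, h2, h]
  · by_cases h1 : e.1.1 = j
    · have : ¬ (e.1.2 : ℕ) < m := by rw [h1] at hlt; omega
      simp [h1, h2, this]
    · simp [h1, h2]

theorem SRwedge_single_lowerIndicator_eq_zero {j : Fin d} (hj : m ≤ (j : ℕ))
    (hadj : ¬ ∃ i : Fin d, (i : ℕ) < m ∧ Γ.Adj i j) :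
    SRwedge p d Γ (Pi.single j 1) (lowerIndicator p d m) = 0 := by
  funext e
  rw [SRwedge_single_lowerIndicator_apply hj, if_neg]
  · rfl
  · rintro ⟨rfl, hi⟩
    exact hadj ⟨e.1.1, hi, e.2.2⟩

/-- Reading off, for each `j`, the coordinate at one edge `(i, j)` with `i < m` sends the family
to minus the standard basis. -/
theorem linearIndependent_SRwedge_single_lowerIndicator :
    LinearIndependent (ZMod p) fun j : lowerNeighbors d m Γ =>
      SRwedge p d Γ (Pi.single j.1 1) (lowerIndicator p d m) := by
  classical
  choose i hi hadj using fun j : lowerNeighbors d m Γ => j.2.2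
  let edge (j : lowerNeighbors d m Γ) : SREdge d Γ :=
    ⟨(i j, j.1), show (i j : ℕ) < j.1 from (hi j).trans_le j.2.1, hadj j⟩
  refine LinearIndependent.of_comp (-LinearMap.funLeft (ZMod p) (ZMod p) edge) ?_
  have hbasis : ∀ j j', (-LinearMap.funLeft (ZMod p) (ZMod p) edge)
      (SRwedge p d Γ (Pi.single j.1 1) (lowerIndicator p d m)) j' = (Pi.single j 1 : lowerNeighbors d m Γ → ZMod p) j' := by
    intro j j'
    simp only [LinearMap.neg_apply, Pi.neg_apply, LinearMap.funLeft_apply,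
      SRwedge_single_lowerIndicator_apply j.2.1, edge, hi, and_true, Pi.single_apply,
      Subtype.ext_iff, eq_comm (a := j'.1)]
    split_ifs <;> simp
  rw [show _ ∘ _ = fun j => Pi.single j 1 from funext fun j => funext (hbasis j)]
  exact Pi.linearIndependent_single_one _ _

theorem span_SRwedge_lowerIndicator_eq :
    span (ZMod p) {y : SRdeg2 p d Γ | ∃ x ∈ span (ZMod p)
        {x | ∃ j : Fin d, m ≤ (j : ℕ) ∧ x = Pi.single j 1},
        y = SRwedge p d Γ x (lowerIndicator p d m)}
      = span (ZMod p) (Set.range fun j : lowerNeighbors d m Γ =>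
          SRwedge p d Γ (Pi.single j.1 1) (lowerIndicator p d m)) := by
  refine (span_setOf_mem_span_eq_span_image (SRwedgeRight p d Γ (lowerIndicator p d m)) _).trans ?_
  apply le_antisymm
  · rw [span_le]
    rintro _ ⟨_, ⟨j, hj, rfl⟩, rfl⟩
    by_cases hadj : ∃ i : Fin d, (i : ℕ) < m ∧ Γ.Adj i j
    · exact subset_span ⟨⟨j, hj, hadj⟩, rfl⟩
    · change SRwedge p d Γ _ _ ∈ (_ : Set _)
      rw [SRwedge_single_lowerIndicator_eq_zero hj hadj]
      exact zero_mem _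
  · exact span_mono (Set.range_subset_iff.mpr fun j => ⟨_, ⟨j.1, j.2.1, rfl⟩, rfl⟩)

end LowerIndicator

theorem stmt1_general (p d m : ℕ) [Fact p.Prime]
    (Γ : SimpleGraph (Fin d))
    -- `α = χ_1 + ⋯ + χ_m` (0-indexed: coordinates `i` with `i < m`)
    (α : Fin d → ZMod p) (hα : α = fun i : Fin d => if (i : ℕ) < m then (1 : ZMod p) else 0)
    -- `V₀ = Span{χ_{m+1},…,χ_d}`
    (V₀ : Submodule (ZMod p) (Fin d → ZMod p))
    (hV₀ : V₀ = Submodule.span (ZMod p)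
      {x | ∃ j : Fin d, m ≤ (j : ℕ) ∧ x = Pi.single j 1}) :
    Module.finrank (ZMod p)
      (Submodule.span (ZMod p) {y : SRdeg2 p d Γ | ∃ x ∈ V₀, y = SRwedge p d Γ x α})
      = Nat.card {j : Fin d // m ≤ (j : ℕ) ∧ ∃ i : Fin d, (i : ℕ) < m ∧ Γ.Adj i j} := by
  classical
  subst hα hV₀
  rw [span_SRwedge_lowerIndicator_eq,
    finrank_span_eq_card linearIndependent_SRwedge_single_lowerIndicator,
    Nat.card_eq_fintype_card]

/-- With `α = χ_1 + ⋯ + χ_m` and `V₀ = Span{χ_{m+1},…,χ_d}`,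
one has `dim (V₀ ∧ α) = |V_{0,α}|`, where `V_{0,α}` is the set of vertices `v_j`
with `j > m` joined to some vertex `v_i` with `i ≤ m`. -/
theorem stmt1 (p d m : ℕ) [Fact p.Prime] (hm : 1 ≤ m) (hmd : m ≤ d)
    (Γ : SimpleGraph (Fin d))
    -- `α = χ_1 + ⋯ + χ_m` (0-indexed: coordinates `i` with `i < m`)
    (α : Fin d → ZMod p) (hα : α = fun i : Fin d => if (i : ℕ) < m then (1 : ZMod p) else 0)
    -- `V₀ = Span{χ_{m+1},…,χ_d}`
    (V₀ : Submodule (ZMod p) (Fin d → ZMod p))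
    (hV₀ : V₀ = Submodule.span (ZMod p)
      {x | ∃ j : Fin d, m ≤ (j : ℕ) ∧ x = Pi.single j 1}) :
    Module.finrank (ZMod p)
      (Submodule.span (ZMod p) {y : SRdeg2 p d Γ | ∃ x ∈ V₀, y = SRwedge p d Γ x α})
      = Nat.card {j : Fin d // m ≤ (j : ℕ) ∧ ∃ i : Fin d, (i : ℕ) < m ∧ Γ.Adj i j} :=
  stmt1_general p d m Γ α hα V₀ hV₀
end

section
/- Let Γ be a finite tree with vertex set {v_1,...,v_d}, d ≥ 1, and let α = χ_1 + ... + χ_d in the Stanley–Reisner algebra Λ_•(Γ*) over Z/p. Then for any fixed index k, the set { χ_i ∧ α : i ≠ k } is a linearly independent subset of Λ_2(Γ*) of cardinality d − 1. -/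
/-!
A linear combination of the `χ_i ∧ α` (`i ≠ k`) is `c ∧ α` with `c = ∑ g_i χ_i`, so `c k = 0`.
Its coefficient at an edge `{u, v}` is `c u - c v`, so if it vanishes then `c` is constant along
edges, hence constant on the connected graph `Γ`, hence zero.
-/

theorem SimpleGraph.Reachable.eq_of_forall_adj {V β : Type*} {G : SimpleGraph V} {f : V → β}
    (hf : ∀ u v, G.Adj u v → f u = f v) {u v : V} (h : G.Reachable u v) : f u = f v := by
  obtain ⟨w⟩ := h
  induction w with
  | nil => rfl
  | cons huv _ ih => exact (hf _ _ huv).trans ih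

section SRwedge

variable (p d : ℕ) (Γ : SimpleGraph (Fin d))

/-- `x ↦ x ∧ α`, where `α = χ_1 + ⋯ + χ_d` is the constant function `1`. -/
def SRwedgeAlpha : (Fin d → ZMod p) →ₗ[ZMod p] SRdeg2 p d Γ where
  toFun x := SRwedge p d Γ x (fun _ => 1)
  map_add' x y := by ext e; simp only [SRwedge, Pi.add_apply]; ring
  map_smul' a x := by
    ext e; simp only [SRwedge, Pi.smul_apply, smul_eq_mul, RingHom.id_apply]; ring

variable {p d Γ}

theorem SRwedgeAlpha_apply (x : Fin d → ZMod p)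
    (e : {e : Fin d × Fin d // e.1 < e.2 ∧ Γ.Adj e.1 e.2}) :
    SRwedgeAlpha p d Γ x e = x e.1.1 - x e.1.2 := by
  simp [SRwedgeAlpha, SRwedge]

theorem eq_of_adj_of_SRwedgeAlpha_eq_zero {x : Fin d → ZMod p} (hx : SRwedgeAlpha p d Γ x = 0)
    {u v : Fin d} (huv : Γ.Adj u v) : x u = x v := by
  have hedge (e : {e : Fin d × Fin d // e.1 < e.2 ∧ Γ.Adj e.1 e.2}) : x e.1.1 = x e.1.2 :=
    sub_eq_zero.mp <| (SRwedgeAlpha_apply x e).symm.trans (congrFun hx e)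
  rcases lt_trichotomy u v with h | rfl | h
  · exact hedge ⟨(u, v), h, huv⟩
  · rfl
  · exact (hedge ⟨(v, u), h, huv.symm⟩).symm

theorem eq_zero_of_SRwedgeAlpha_eq_zero (hΓ : Γ.Connected) {k : Fin d} {x : Fin d → ZMod p}
    (hx : SRwedgeAlpha p d Γ x = 0) (hxk : x k = 0) : x = 0 :=
  funext fun v => ((hΓ.preconnected v k).eq_of_forall_adj
    fun _ _ => eq_of_adj_of_SRwedgeAlpha_eq_zero hx).trans hxk

end SRwedge

theorem span_single_one_ne_le_ker_proj {R ι : Type*} [Semiring R] [DecidableEq ι] (k : ι) :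
    Submodule.span R (Set.range fun i : {i : ι // i ≠ k} => (Pi.single i.1 1 : ι → R)) ≤
      LinearMap.ker (LinearMap.proj k) := by
  rw [Submodule.span_le]
  rintro _ ⟨i, rfl⟩
  simp [i.2.symm]

theorem stmt2_general (p d : ℕ)
    (Γ : SimpleGraph (Fin d)) (hΓ : Γ.IsTree) (k : Fin d) :
    LinearIndependent (ZMod p)
      (fun i : {i : Fin d // i ≠ k} =>
        SRwedge p d Γ (Pi.single i.1 1) (fun _ => 1)) ∧
    Nat.card {i : Fin d // i ≠ k} = d - 1 := by
  refine ⟨?_, by simp [Nat.card_eq_fintype_card, Fintype.card_subtype_compl]⟩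
  have hsingle : LinearIndependent (ZMod p) fun i : {i : Fin d // i ≠ k} =>
      (Pi.single i.1 1 : Fin d → ZMod p) :=
    (Pi.linearIndependent_single_one (Fin d) (ZMod p)).comp _ Subtype.val_injective
  refine hsingle.map (f := SRwedgeAlpha p d Γ) (Submodule.disjoint_def.mpr fun x hx hker => ?_)
  exact eq_zero_of_SRwedgeAlpha_eq_zero hΓ.connected hker (span_single_one_ne_le_ker_proj k hx)

/-- If `Γ` is a finite tree on vertices `v_1,…,v_d` and
`α = χ_1 + ⋯ + χ_d`, then for any fixed `k` the family `{χ_i ∧ α : i ≠ k}` is a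
linearly independent subset of `Λ₂(Γ*)`, of cardinality `d − 1`. -/
theorem stmt2 (p d : ℕ) [Fact p.Prime] (hd : 1 ≤ d)
    (Γ : SimpleGraph (Fin d)) (hΓ : Γ.IsTree) (k : Fin d) :
    LinearIndependent (ZMod p)
      (fun i : {i : Fin d // i ≠ k} =>
        SRwedge p d Γ (Pi.single i.1 1) (fun _ => 1)) ∧
    Nat.card {i : Fin d // i ≠ k} = d - 1 :=
  stmt2_general p d Γ hΓ k
end

section
/- Let G_Γ be the pro-p RAAG associated to a finite simplicial graph Γ = (V,E), and let α_1,...,α_n (n ≥ 2) be homomorphisms G_Γ → Z/p such that for each h = 1,...,n−1 and each edge {v_l,v_{l'}} ∈ E one has α_h(v_l)α_{h+1}(v_{l'}) − α_h(v_{l'})α_{h+1}(v_l) = 0. Then there exists a continuous homomorphism ρ: G_Γ → U_{n+1}(Z/p) into the group of unipotent upper-triangular (n+1)×(n+1) matrices over Z/p such that the (i,i+1) entry of ρ equals α_i for every i = 1,...,n. -/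
/-!
Send the generator `v_l` to `1 + N_l`, where `N_l` carries `α_1(v_l), …, α_n(v_l)` on the
superdiagonal and zeros elsewhere. Two such matrices commute iff `N_l N_{l'} = N_{l'} N_l`, and
the only nonzero entries of `N_l N_{l'}` are the products `α_h(v_l) α_{h+1}(v_{l'})` on the second
superdiagonal, so the cup-product condition is exactly the defining relation of the RAAG. On
unitriangular matrices the entries next to the diagonal are additive, so the `(i, i+1)` entry of
`ρ` is a homomorphism, and it agrees with `α_i` on the generators.
-/

/-- The right-angled Artin group of a finite simplicial graph `Γ`, presented by the
vertices with commuting relations along the edges.  Since the target group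
`U_{n+1}(ℤ/p)` below is a finite `p`-group, continuous homomorphisms from the pro-`p`
completion `G_Γ` correspond exactly to (abstract) homomorphisms from this discrete
right-angled Artin group, so the statement about `G_Γ` is formalized via it. -/
def RAAG {d : ℕ} (Γ : SimpleGraph (Fin d)) : Type :=
  PresentedGroup {r : FreeGroup (Fin d) |
    ∃ i j : Fin d, Γ.Adj i j ∧
      r = FreeGroup.of i * FreeGroup.of j * (FreeGroup.of i)⁻¹ * (FreeGroup.of j)⁻¹}

instance {d : ℕ} (Γ : SimpleGraph (Fin d)) : Group (RAAG Γ) := by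
  unfold RAAG; infer_instance

/-- The generator of `RAAG Γ` corresponding to a vertex. -/
def RAAG.of {d : ℕ} (Γ : SimpleGraph (Fin d)) (i : Fin d) : RAAG Γ :=
  PresentedGroup.of (rels := {r : FreeGroup (Fin d) |
    ∃ i j : Fin d, Γ.Adj i j ∧
      r = FreeGroup.of i * FreeGroup.of j * (FreeGroup.of i)⁻¹ * (FreeGroup.of j)⁻¹}) i

namespace Matrix

section UpperTriangular

variable {ι R : Type*} [Fintype ι] [LinearOrder ι] [NonUnitalNonAssocSemiring R]
  {A B : Matrix ι ι R}

theorem IsUpperTriangular.mul_apply_self (hA : A.IsUpperTriangular) (hB : B.IsUpperTriangular)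
    (i : ι) : (A * B) i i = A i i * B i i := by
  rw [mul_apply, Finset.sum_eq_single i]
  · intro k _ hki
    rcases hki.lt_or_gt with hki | hik
    · rw [hA hki, zero_mul]
    · rw [hB hik, mul_zero]
  · simp

theorem IsUpperTriangular.mul_apply_of_covBy (hA : A.IsUpperTriangular)
    (hB : B.IsUpperTriangular) {i j : ι} (hij : i ⋖ j) :
    (A * B) i j = A i i * B i j + A i j * B j j := by
  rw [mul_apply, Finset.sum_eq_add i j hij.ne]
  · intro k _ ⟨hki, hkj⟩
    rcases hki.lt_or_gt with hki | hik
    · rw [hA hki, zero_mul]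
    rcases hkj.lt_or_gt with hkj | hjk
    · exact absurd hkj (hij.2 hik)
    · rw [hB hjk, mul_zero]
  all_goals simp

end UpperTriangular

section Superdiagonal

variable {R : Type*} {n : ℕ}

def superdiag [Zero R] (c : Fin n → R) : Matrix (Fin (n + 1)) (Fin (n + 1)) R :=
  of fun i j => if h : (i : ℕ) + 1 = j then c ⟨i, by omega⟩ else 0

@[simp]
theorem superdiag_apply_castSucc_succ [Zero R] (c : Fin n → R) (i : Fin n) :
    superdiag c i.castSucc i.succ = c i := by
  simp [superdiag]

@[simp]
theorem superdiag_apply_self [Zero R] (c : Fin n → R) (i : Fin (n + 1)) :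
    superdiag c i i = 0 := by
  simp [superdiag]

theorem superdiag_isUpperTriangular [Zero R] (c : Fin n → R) :
    (superdiag c).IsUpperTriangular := by
  intro i j hji
  simp only [superdiag, of_apply, dite_eq_right_iff]
  intro h
  rw [id, id, Fin.lt_def] at hji
  omega

theorem superdiag_mul_superdiag_apply [NonUnitalNonAssocSemiring R] (a b : Fin n → R)
    (i j : Fin (n + 1)) :
    (superdiag a * superdiag b) i j =
      if h : (i : ℕ) + 2 = j then a ⟨i, by omega⟩ * b ⟨i + 1, by omega⟩ else 0 := by
  rw [mul_apply]
  split_ifs with h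
  · rw [Finset.sum_eq_single ⟨i + 1, by omega⟩]
    · simp [superdiag, h]
    · intro k _ hk
      simp only [superdiag, of_apply]
      rw [dif_neg fun h' => hk (Fin.ext h'.symm), zero_mul]
    · simp
  · refine Finset.sum_eq_zero fun k _ => ?_
    simp only [superdiag, of_apply]
    split_ifs <;> first | omega | simp

theorem commute_superdiag [NonUnitalNonAssocSemiring R] {a b : Fin n → R}
    (h : ∀ k k' : Fin n, (k' : ℕ) = k + 1 → a k * b k' = b k * a k') :
    Commute (superdiag a) (superdiag b) := by
  ext i j
  rw [superdiag_mul_superdiag_apply, superdiag_mul_superdiag_apply]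
  split_ifs
  · exact h _ _ rfl
  · rfl

end Superdiagonal

section Unitriangular

variable {ι R : Type*} [Fintype ι] [LinearOrder ι] [DecidableEq ι] [CommRing R]

theorem isUnit_of_isUpperTriangular {M : Matrix ι ι R} (hM : M.IsUpperTriangular)
    (hdiag : ∀ i, M i i = 1) : IsUnit M :=
  (isUnit_iff_isUnit_det M).mpr (by simp [det_of_isUpperTriangular hM, hdiag])

variable (ι R) in
def unitriangularGroup : Subgroup (Matrix ι ι R)ˣ where
  carrier := {u | (u : Matrix ι ι R).IsUpperTriangular ∧ ∀ i, (u : Matrix ι ι R) i i = 1}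
  one_mem' := ⟨blockTriangular_one, one_apply_eq⟩
  mul_mem' := fun ⟨hu, hu'⟩ ⟨hv, hv'⟩ =>
    ⟨hu.mul hv, fun i => by simp [hu.mul_apply_self hv, hu', hv']⟩
  inv_mem' := by
    rintro u ⟨hu, hu'⟩
    have : Invertible (u : Matrix ι ι R) := u.invertible
    have hinv : (↑u⁻¹ : Matrix ι ι R).IsUpperTriangular := by
      rw [coe_units_inv]; exact blockTriangular_inv_of_blockTriangular hu
    refine ⟨hinv, fun i => ?_⟩
    have h := congr_fun₂ (u.inv_mul : (↑u⁻¹ * ↑u : Matrix ι ι R) = 1) i i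
    rwa [hinv.mul_apply_self hu, hu', mul_one, one_apply_eq] at h

namespace unitriangularGroup

noncomputable def mk (M : Matrix ι ι R) (hM : M.IsUpperTriangular) (hdiag : ∀ i, M i i = 1) :
    unitriangularGroup ι R :=
  ⟨(isUnit_of_isUpperTriangular hM hdiag).unit, hM, hdiag⟩

@[simp]
theorem val_mk (M : Matrix ι ι R) (hM : M.IsUpperTriangular) (hdiag : ∀ i, M i i = 1) :
    ((mk M hM hdiag).1 : Matrix ι ι R) = M :=
  rfl

theorem commute_mk {M N : Matrix ι ι R} (hM : M.IsUpperTriangular) (hdiagM : ∀ i, M i i = 1)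
    (hN : N.IsUpperTriangular) (hdiagN : ∀ i, N i i = 1) (h : Commute M N) :
    Commute (mk M hM hdiagM) (mk N hN hdiagN) :=
  Subtype.ext (Units.ext h)

def entryHom {i j : ι} (hij : i ⋖ j) : unitriangularGroup ι R →* Multiplicative R where
  toFun u := .ofAdd (u.1.1 i j)
  map_one' := by simp [one_apply_ne hij.ne]
  map_mul' u v := by
    simp [u.2.1.mul_apply_of_covBy v.2.1 hij, u.2.2, v.2.2, add_comm, ofAdd_add]

@[simp]
theorem entryHom_apply {i j : ι} (hij : i ⋖ j) (u : unitriangularGroup ι R) :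
    entryHom hij u = .ofAdd (u.1.1 i j) :=
  rfl

end unitriangularGroup

end Unitriangular

end Matrix

theorem Fin.castSucc_covBy_succ {n : ℕ} (i : Fin n) : i.castSucc ⋖ i.succ :=
  ⟨Fin.castSucc_lt_succ, fun k hik hki => by
    rw [Fin.lt_def] at hik hki
    simp only [Fin.val_castSucc, Fin.val_succ] at hik hki
    omega⟩

namespace RAAG

variable {d : ℕ} {Γ : SimpleGraph (Fin d)} {G : Type*} [Group G]

def lift (f : Fin d → G) (hf : ∀ l l', Γ.Adj l l' → Commute (f l) (f l')) : RAAG Γ →* G :=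
  PresentedGroup.toGroup (f := f) <| by
    rintro _ ⟨l, l', hll', rfl⟩
    simp [(hf l l' hll').eq]

@[simp]
theorem lift_of (f : Fin d → G) (hf : ∀ l l', Γ.Adj l l' → Commute (f l) (f l')) (l : Fin d) :
    lift f hf (RAAG.of Γ l) = f l :=
  PresentedGroup.toGroup.of (f := f) _

theorem hom_ext {φ ψ : RAAG Γ →* G} (h : ∀ l, φ (RAAG.of Γ l) = ψ (RAAG.of Γ l)) : φ = ψ :=
  PresentedGroup.ext h

end RAAG

open Matrix

theorem stmt3_general (p d n : ℕ) (Γ : SimpleGraph (Fin d))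
    (α : Fin n → (RAAG Γ →* Multiplicative (ZMod p)))
    (hcup : ∀ h h' : Fin n, (h' : ℕ) = (h : ℕ) + 1 →
      ∀ l l' : Fin d, Γ.Adj l l' →
        Multiplicative.toAdd (α h (RAAG.of Γ l)) *
          Multiplicative.toAdd (α h' (RAAG.of Γ l')) -
        Multiplicative.toAdd (α h (RAAG.of Γ l')) *
          Multiplicative.toAdd (α h' (RAAG.of Γ l)) = 0) :
    ∃ ρ : RAAG Γ →* Matrix (Fin (n + 1)) (Fin (n + 1)) (ZMod p),
      (∀ g i j, j < i → ρ g i j = 0) ∧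
      (∀ g i, ρ g i i = 1) ∧
      (∀ (i : Fin n) (g : RAAG Γ),
        ρ g i.castSucc i.succ = Multiplicative.toAdd (α i g)) := by
  let a (l : Fin d) (k : Fin n) : ZMod p := (α k (RAAG.of Γ l)).toAdd
  have hupper (l : Fin d) : (1 + superdiag (a l)).IsUpperTriangular :=
    blockTriangular_one.add (superdiag_isUpperTriangular _)
  have hdiag (l : Fin d) (i : Fin (n + 1)) : (1 + superdiag (a l)) i i = 1 := by simp
  let gen (l : Fin d) := unitriangularGroup.mk _ (hupper l) (hdiag l)
  have hcomm (l l' : Fin d) (hll' : Γ.Adj l l') : Commute (gen l) (gen l') :=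
    unitriangularGroup.commute_mk _ _ _ _ <| (Commute.one_left _).add_left <|
      (Commute.one_right _).add_right <|
        commute_superdiag fun k k' hk => sub_eq_zero.mp (hcup k k' hk l l' hll')
  let ρ := RAAG.lift gen hcomm
  refine ⟨(Units.coeHom _).comp ((unitriangularGroup _ _).subtype.comp ρ),
    fun g => (ρ g).2.1, fun g => (ρ g).2.2, fun i g => ?_⟩
  have hcov := i.castSucc_covBy_succ
  have hentry : (unitriangularGroup.entryHom hcov).comp ρ = α i := RAAG.hom_ext fun l => by
    simp [ρ, gen, one_apply_ne hcov.ne, a]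
  exact congrArg (fun φ : RAAG Γ →* Multiplicative (ZMod p) => (φ g).toAdd) hentry

/-- Let `G_Γ` be the (pro-`p`) RAAG of a finite simplicial graph and
let `α_1,…,α_n : G_Γ → ℤ/p` (`n ≥ 2`) be homomorphisms such that for each
`h = 1,…,n−1` and each edge `{v_l, v_{l'}}` one has
`α_h(v_l)α_{h+1}(v_{l'}) − α_h(v_{l'})α_{h+1}(v_l) = 0`.  Then there is a
homomorphism `ρ : G_Γ → U_{n+1}(ℤ/p)` into the unipotent upper-triangular matrices
whose `(i,i+1)` entry is `α_i` for `i = 1,…,n`. -/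
theorem stmt3 (p d n : ℕ) [Fact p.Prime] (hn : 2 ≤ n) (Γ : SimpleGraph (Fin d))
    (α : Fin n → (RAAG Γ →* Multiplicative (ZMod p)))
    (hcup : ∀ h h' : Fin n, (h' : ℕ) = (h : ℕ) + 1 →
      ∀ l l' : Fin d, Γ.Adj l l' →
        Multiplicative.toAdd (α h (RAAG.of Γ l)) *
          Multiplicative.toAdd (α h' (RAAG.of Γ l')) -
        Multiplicative.toAdd (α h (RAAG.of Γ l')) *
          Multiplicative.toAdd (α h' (RAAG.of Γ l)) = 0) :
    ∃ ρ : RAAG Γ →* Matrix (Fin (n + 1)) (Fin (n + 1)) (ZMod p),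
      (∀ g i j, j < i → ρ g i j = 0) ∧
      (∀ g i, ρ g i i = 1) ∧
      (∀ (i : Fin n) (g : RAAG Γ),
        ρ g i.castSucc i.succ = Multiplicative.toAdd (α i g)) :=
  stmt3_general p d n Γ α hcup
end

section
/- Let Γ' be an induced subgraph of the graph Q_n (a row of n squares), and let q(Γ') denote the number of distinct induced subgraphs of Γ' isomorphic to a 4-cycle (subsquares). Then |E(Γ')| − d(Γ') + r(Γ') = q(Γ'), where d(Γ') is the number of vertices and r(Γ') the number of connected components of Γ'. -/
/-!
Add the vertices of `S` rung by rung and follow the cycle rank `|E| - |V| + c` of the induced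
subgraph. Inserting a vertex whose neighbours already present form a subsingleton does not change
it; inserting one with two neighbours in a common component raises it by one. Inserting the two
vertices `2k, 2k+1` of a rung in a suitable order, every step is of one of these kinds, and the
rank goes up exactly when the rung closes the square `{2k-2, 2k-1, 2k, 2k+1}`. These `n` squares
are all the induced 4-cycles of the ladder: the largest vertex of an induced 4-cycle has two
smaller neighbours, so it is odd and the cycle is the square below it.
-/

/-- The ladder graph `Q_n` (a row of `n` squares): vertices `v_1, …, v_{2(n+1)}`
(0-indexed here), with edges `{v_{2i−1}, v_{2i+1}}`, `{v_{2i}, v_{2i+2}}` for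
`1 ≤ i ≤ n` and rungs `{v_{2i−1}, v_{2i}}` for `1 ≤ i ≤ n+1`. -/
def ladderGraph (n : ℕ) : SimpleGraph (Fin (2 * (n + 1))) :=
  SimpleGraph.fromRel (fun a b =>
    (∃ i, 1 ≤ i ∧ i ≤ n ∧
      (((a : ℕ) = 2 * i - 2 ∧ (b : ℕ) = 2 * i) ∨
       ((a : ℕ) = 2 * i - 1 ∧ (b : ℕ) = 2 * i + 1))) ∨
    (∃ i, 1 ≤ i ∧ i ≤ n + 1 ∧ (a : ℕ) = 2 * i - 2 ∧ (b : ℕ) = 2 * i - 1))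

namespace SimpleGraph

variable {V : Type*} {G : SimpleGraph V}

theorem Reachable.apply_eq_of_forall_adj {β : Sort*} {f : V → β}
    (hf : ∀ a b, G.Adj a b → f a = f b) {a b : V} (h : G.Reachable a b) : f a = f b := by
  obtain ⟨p⟩ := h
  induction p with
  | nil => rfl
  | cons hadj _ ih => exact (hf _ _ hadj).trans ih

variable (G) in
def edgesWithin (R : Set V) : Set (Sym2 V) :=
  {e | e ∈ G.edgeSet ∧ ∀ v ∈ e, v ∈ R}

variable (G) in
def squaresWithin (R : Set V) : Set (Set V) :=
  {T | T ⊆ R ∧ Nonempty (G.induce T ≃g cycleGraph 4)}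

variable (G) in
noncomputable def cycleRank (R : Set V) : ℤ :=
  (edgesWithin G R).ncard - R.ncard + Nat.card (G.induce R).ConnectedComponent

theorem cycleRank_empty : cycleRank G ∅ = 0 := by
  have : edgesWithin G ∅ = ∅ :=
    Set.eq_empty_of_forall_notMem fun e ⟨_, h⟩ => h _ (Sym2.out_fst_mem e)
  simp [cycleRank, this]

variable {R : Set V} {v : V}

theorem edgesWithin_insert (hv : v ∉ R) :
    edgesWithin G (insert v R) = edgesWithin G R ∪ (s(v, ·)) '' (G.neighborSet v ∩ R) := by
  ext e
  induction e with
  | _ a b =>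
    simp only [edgesWithin, Set.mem_union, Set.mem_ofPred_eq, Set.mem_image, Set.mem_inter_iff,
      mem_neighborSet, mem_edgeSet, Sym2.forall_mem_pair, Set.mem_insert_iff, Sym2.eq_iff]
    constructor
    · rintro ⟨hab, ha, hb⟩
      rcases ha with rfl | ha
      · exact Or.inr ⟨b, ⟨hab, hb.resolve_left hab.ne'⟩, Or.inl ⟨rfl, rfl⟩⟩
      rcases hb with rfl | hb
      · exact Or.inr ⟨a, ⟨hab.symm, ha⟩, Or.inr ⟨rfl, rfl⟩⟩
      exact Or.inl ⟨hab, ha, hb⟩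
    · rintro (⟨hab, ha, hb⟩ | ⟨u, ⟨hvu, hu⟩, ⟨rfl, rfl⟩ | ⟨rfl, rfl⟩⟩)
      · exact ⟨hab, Or.inr ha, Or.inr hb⟩
      · exact ⟨hvu, Or.inl rfl, Or.inr hu⟩
      · exact ⟨hvu.symm, Or.inr hu, Or.inl rfl⟩

theorem card_connectedComponent_induce_insert_of_reachable (hv : v ∉ R) (u₀ : R)
    (hadj : G.Adj v u₀) (h : ∀ u : R, G.Adj v u → (G.induce R).Reachable u u₀) :
    Nat.card (G.induce (insert v R)).ConnectedComponent
      = Nat.card (G.induce R).ConnectedComponent := by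
  classical
  let f : ↥(insert v R) → (G.induce R).ConnectedComponent := fun x =>
    if hx : (x : V) = v then (G.induce R).connectedComponentMk u₀
    else (G.induce R).connectedComponentMk ⟨x, x.2.resolve_left hx⟩
  have hf : ∀ x y, (G.induce (insert v R)).Adj x y → f x = f y := by
    rintro ⟨x, hx⟩ ⟨y, hy⟩ (hxy : G.Adj x y)
    by_cases hxv : x = v
    · subst hxv
      simp only [f, dif_pos, dif_neg hxy.ne']
      exact ConnectedComponent.sound (h ⟨y, hy.resolve_left hxy.ne'⟩ hxy).symm
    by_cases hyv : y = v
    · subst hyv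
      simp only [f, dif_pos, dif_neg hxv]
      exact ConnectedComponent.sound (h ⟨x, hx.resolve_left hxv⟩ hxy.symm)
    simp only [f, dif_neg hxv, dif_neg hyv]
    exact ConnectedComponent.sound (Adj.reachable hxy)
  let e : (G.induce (insert v R)).ConnectedComponent ≃ (G.induce R).ConnectedComponent :=
    { toFun := ConnectedComponent.lift f fun _ _ p _ => p.reachable.apply_eq_of_forall_adj hf
      invFun := ConnectedComponent.map (G.induceHomOfLE (Set.subset_insert v R)).toHom
      left_inv := by
        refine ConnectedComponent.ind fun x => ?_
        by_cases hx : (x : V) = v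
        · dsimp only [ConnectedComponent.lift_mk, f]
          rw [dif_pos hx, ConnectedComponent.map_mk]
          refine ConnectedComponent.sound (Adj.reachable ?_)
          change G.Adj u₀ x
          rw [hx]
          exact hadj.symm
        · dsimp only [ConnectedComponent.lift_mk, f]
          rw [dif_neg hx]
          rfl
      right_inv := ConnectedComponent.ind fun x => dif_neg fun (hx : (x : V) = v) => hv (hx ▸ x.2) }
  exact Nat.card_congr e

variable [Finite V]

theorem ncard_edgesWithin_insert (hv : v ∉ R) :
    (edgesWithin G (insert v R)).ncard
      = (edgesWithin G R).ncard + (G.neighborSet v ∩ R).ncard := by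
  rw [edgesWithin_insert hv, Set.ncard_union_eq, Set.ncard_image_of_injective _
    fun _ _ => Sym2.congr_right.mp]
  rw [Set.disjoint_right]
  rintro _ ⟨u, -, rfl⟩ ⟨-, h⟩
  exact hv (h v (Sym2.mem_mk_left v u))

theorem card_connectedComponent_induce_insert_of_forall_not_adj (hv : v ∉ R)
    (h : ∀ u ∈ R, ¬G.Adj v u) :
    Nat.card (G.induce (insert v R)).ConnectedComponent
      = Nat.card (G.induce R).ConnectedComponent + 1 := by
  classical
  let f : ↥(insert v R) → Option (G.induce R).ConnectedComponent := fun x =>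
    if hx : (x : V) = v then none
    else some ((G.induce R).connectedComponentMk ⟨x, x.2.resolve_left hx⟩)
  have hf : ∀ x y, (G.induce (insert v R)).Adj x y → f x = f y := by
    rintro ⟨x, hx⟩ ⟨y, hy⟩ (hxy : G.Adj x y)
    by_cases hxv : x = v
    · subst hxv; exact absurd hxy (h y (hy.resolve_left hxy.ne'))
    by_cases hyv : y = v
    · subst hyv; exact absurd hxy.symm (h x (hx.resolve_left hxy.ne))
    simp only [f, dif_neg hxv, dif_neg hyv]
    exact congrArg some (ConnectedComponent.sound (Adj.reachable hxy))
  let e : (G.induce (insert v R)).ConnectedComponent ≃ Option (G.induce R).ConnectedComponent :=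
    { toFun := ConnectedComponent.lift f fun _ _ p _ => p.reachable.apply_eq_of_forall_adj hf
      invFun := fun o => o.elim ((G.induce _).connectedComponentMk ⟨v, Set.mem_insert v R⟩)
        (ConnectedComponent.map (G.induceHomOfLE (Set.subset_insert v R)).toHom)
      left_inv := by
        refine ConnectedComponent.ind fun x => ?_
        by_cases hx : (x : V) = v
        · dsimp only [ConnectedComponent.lift_mk, f]
          rw [dif_pos hx]
          exact congrArg _ (Subtype.ext hx.symm)
        · dsimp only [ConnectedComponent.lift_mk, f]
          rw [dif_neg hx]
          rfl
      right_inv := by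
        rintro (_ | c)
        · exact dif_pos rfl
        · induction c using ConnectedComponent.ind with
          | h x => exact dif_neg fun (hx : (x : V) = v) => hv (hx ▸ x.2) }
  rw [Nat.card_congr e, Finite.card_option]

theorem cycleRank_insert_of_subsingleton (hv : v ∉ R)
    (h : (G.neighborSet v ∩ R).Subsingleton) :
    cycleRank G (insert v R) = cycleRank G R := by
  unfold cycleRank
  rw [ncard_edgesWithin_insert hv, Set.ncard_insert_of_notMem hv]
  rcases h.eq_empty_or_singleton with hN | ⟨u, hN⟩
  · have hnadj : ∀ u ∈ R, ¬G.Adj v u := fun u hu hvu =>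
      (Set.eq_empty_iff_forall_notMem.mp hN) u ⟨hvu, hu⟩
    rw [card_connectedComponent_induce_insert_of_forall_not_adj hv hnadj, hN, Set.ncard_empty]
    push_cast
    ring
  · obtain ⟨hvu, hu⟩ : u ∈ G.neighborSet v ∩ R := hN ▸ rfl
    have hreach : ∀ w : R, G.Adj v w → (G.induce R).Reachable w ⟨u, hu⟩ := fun w hvw => by
      have hw : (w : V) ∈ ({u} : Set V) := hN ▸ ⟨hvw, w.2⟩
      rw [(Subtype.ext (Set.mem_singleton_iff.mp hw) : w = ⟨u, hu⟩)]
    rw [card_connectedComponent_induce_insert_of_reachable hv ⟨u, hu⟩ hvu hreach, hN,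
      Set.ncard_singleton]
    push_cast
    ring

theorem cycleRank_insert_of_reachable (hv : v ∉ R) {u₀ u₁ : R} (hne : (u₀ : V) ≠ u₁)
    (hN : G.neighborSet v ∩ R = {(u₀ : V), (u₁ : V)}) (hreach : (G.induce R).Reachable u₀ u₁) :
    cycleRank G (insert v R) = cycleRank G R + 1 := by
  have hreach' : ∀ w : R, G.Adj v w → (G.induce R).Reachable w u₀ := fun w hvw => by
    rcases (hN ▸ ⟨hvw, w.2⟩ : (w : V) ∈ ({(u₀ : V), (u₁ : V)} : Set V)) with hw | hw
    · rw [Subtype.ext hw]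
    · rw [Subtype.ext hw]
      exact hreach.symm
  have hvu₀ : G.Adj v u₀ := (hN ▸ Set.mem_insert _ _ : (u₀ : V) ∈ G.neighborSet v ∩ R).1
  unfold cycleRank
  rw [ncard_edgesWithin_insert hv, Set.ncard_insert_of_notMem hv,
    card_connectedComponent_induce_insert_of_reachable hv u₀ hvu₀ hreach', hN, Set.ncard_pair hne]
  push_cast
  ring

theorem Iso.exists_of_cycleGraph_four {W : Type*} {H : SimpleGraph W} (e : H ≃g cycleGraph 4)
    (p : W) : ∃ x y w, H.Adj p x ∧ H.Adj p y ∧ H.Adj w x ∧ H.Adj w y ∧ x ≠ y ∧ w ≠ p ∧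
      ∀ z, z = p ∨ z = x ∨ z = y ∨ z = w := by
  have key : ∀ β : Fin 4, (cycleGraph 4).Adj β (β + 1) ∧ (cycleGraph 4).Adj β (β - 1) ∧
      (cycleGraph 4).Adj (β + 2) (β + 1) ∧ (cycleGraph 4).Adj (β + 2) (β - 1) ∧
      β + 1 ≠ β - 1 ∧ β + 2 ≠ β ∧ ∀ γ, γ = β ∨ γ = β + 1 ∨ γ = β - 1 ∨ γ = β + 2 := by
    decide
  obtain ⟨h₁, h₂, h₃, h₄, h₅, h₆, h₇⟩ := key (e p)
  refine ⟨e.symm (e p + 1), e.symm (e p - 1), e.symm (e p + 2), ?_, ?_, ?_, ?_, ?_, ?_, ?_⟩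
  any_goals simp only [← e.map_adj_iff, e.apply_symm_apply, ne_eq, e.symm_apply_eq]
  · exact h₁
  · exact h₂
  · exact h₃
  · exact h₄
  · exact h₅
  · exact h₆
  · intro z
    simp only [e.eq_symm_apply]
    rcases h₇ (e z) with h | h | h | h
    · exact Or.inl (e.injective h)
    all_goals simp [h]

end SimpleGraph

open SimpleGraph

theorem ladderGraph_adj {n : ℕ} {a b : Fin (2 * (n + 1))} :
    (ladderGraph n).Adj a b ↔ (a : ℕ) + 2 = b ∨ (b : ℕ) + 2 = a ∨
      ((a : ℕ) + 1 = b ∧ (a : ℕ) % 2 = 0) ∨ ((b : ℕ) + 1 = a ∧ (b : ℕ) % 2 = 0) := by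
  simp only [ladderGraph, fromRel_adj]
  constructor
  · rintro ⟨-, (⟨i, _⟩ | ⟨i, _⟩) | (⟨i, _⟩ | ⟨i, _⟩)⟩ <;> omega
  · intro h
    refine ⟨fun hab => by subst hab; omega, ?_⟩
    rcases h with h | h | h | h
    · exact Or.inl (Or.inl ⟨a / 2 + 1, by omega, by omega, by omega⟩)
    · exact Or.inr (Or.inl ⟨b / 2 + 1, by omega, by omega, by omega⟩)
    · exact Or.inl (Or.inr ⟨a / 2 + 1, by omega, by omega, by omega, by omega⟩)
    · exact Or.inr (Or.inr ⟨b / 2 + 1, by omega, by omega, by omega, by omega⟩)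

/-- Vertex `x` is `v_{x+1}` of the paper, so this is the `k`-th square
`{v_{2k-1}, v_{2k}, v_{2k+1}, v_{2k+2}}`, for `1 ≤ k ≤ n`. -/
def ladderSquare (n k : ℕ) : Set (Fin (2 * (n + 1))) :=
  {x | 2 * k ≤ (x : ℕ) + 2 ∧ (x : ℕ) ≤ 2 * k + 1}

theorem nonempty_iso_ladderSquare {n k : ℕ} (hk : 1 ≤ k) (hkn : k ≤ n) :
    Nonempty ((ladderGraph n).induce (ladderSquare n k) ≃g cycleGraph 4) := by
  let σ : Fin 4 → ℕ := ![0, 1, 3, 2]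
  have hσ : ∀ i, σ i ≤ 3 := by decide
  let f : Fin 4 → ladderSquare n k := fun i =>
    ⟨⟨2 * k - 2 + σ i, by have := hσ i; omega⟩, by have := hσ i; constructor <;> simp <;> omega⟩
  have hinj : Function.Injective f := by
    intro i j hij
    have hσij : σ i = σ j := by
      have := congrArg (fun z : ladderSquare n k => ((z : Fin (2 * (n + 1))) : ℕ)) hij
      simp only [f] at this
      omega
    have hσinj : ∀ i j : Fin 4, σ i = σ j → i = j := by decide
    exact hσinj i j hσij
  have hsurj : Function.Surjective f := by
    rintro ⟨z, hz₁, hz₂⟩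
    obtain ⟨i, hi⟩ : ∃ i, σ i = (z : ℕ) - (2 * k - 2) := by
      have : ∀ m < 4, ∃ i, σ i = m := by decide
      exact this _ (by omega)
    exact ⟨i, Subtype.ext (Fin.ext (by simp only [f]; omega))⟩
  have hadj : ∀ i j, ((ladderGraph n).induce (ladderSquare n k)).Adj (f i) (f j) ↔
      (cycleGraph 4).Adj i j := by
    have : ∀ i j : Fin 4, (σ i + 2 = σ j ∨ σ j + 2 = σ i ∨ (σ i + 1 = σ j ∧ σ i % 2 = 0) ∨
        (σ j + 1 = σ i ∧ σ j % 2 = 0)) ↔ (cycleGraph 4).Adj i j := by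
      decide
    intro i j
    rw [← this, induce_adj, ladderGraph_adj]
    simp only [f]
    omega
  exact ⟨(⟨Equiv.ofBijective f ⟨hinj, hsurj⟩, hadj _ _⟩ : cycleGraph 4 ≃g _).symm⟩

theorem eq_ladderSquare_of_iso {n : ℕ} {T : Set (Fin (2 * (n + 1)))}
    (e : (ladderGraph n).induce T ≃g cycleGraph 4) :
    ∃ k, 1 ≤ k ∧ k ≤ n ∧ T = ladderSquare n k := by
  obtain ⟨m, hmT, hmax⟩ :=
    T.exists_max_image (fun x => (x : ℕ)) T.toFinite ⟨_, (e.symm 0).2⟩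
  obtain ⟨x, y, w, hx, hy, hwx, hwy, hxy, hwm, hcover⟩ :=
    e.exists_of_cycleGraph_four ⟨m, hmT⟩
  rw [induce_adj, ladderGraph_adj] at hx hy hwx hwy
  dsimp only at hx hy
  have := hmax x x.2
  have := hmax y y.2
  have := hmax w w.2
  have hxy' : ((x : Fin (2 * (n + 1))) : ℕ) ≠ y := by
    simpa [Subtype.ext_iff, Fin.ext_iff] using hxy
  have hwm' : ((w : Fin (2 * (n + 1))) : ℕ) ≠ m := by
    simpa [Subtype.ext_iff, Fin.ext_iff] using hwm
  refine ⟨m / 2, by omega, by omega, ?_⟩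
  ext z
  constructor
  · intro hz
    rcases hcover ⟨z, hz⟩ with h | h | h | h <;>
    · have := congrArg (fun t : T => ((t : Fin (2 * (n + 1))) : ℕ)) h
      simp only at this
      constructor <;> omega
  · rintro ⟨hz₁, hz₂⟩
    have : z = m ∨ z = x ∨ z = y ∨ z = w := by
      simp only [Fin.ext_iff]
      omega
    rcases this with rfl | rfl | rfl | rfl
    exacts [hmT, x.2, y.2, w.2]

theorem ladderGraph_nonempty_iso_cycleGraph_four_iff {n : ℕ} {T : Set (Fin (2 * (n + 1)))} :
    Nonempty ((ladderGraph n).induce T ≃g cycleGraph 4) ↔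
      ∃ k, 1 ≤ k ∧ k ≤ n ∧ T = ladderSquare n k := by
  constructor
  · rintro ⟨e⟩
    exact eq_ladderSquare_of_iso e
  · rintro ⟨k, hk, hkn, rfl⟩
    exact nonempty_iso_ladderSquare hk hkn

open scoped Classical

theorem ncard_squaresWithin_ladderGraph {n : ℕ} (R : Set (Fin (2 * (n + 1)))) :
    ((squaresWithin (ladderGraph n) R).ncard : ℤ) =
      ∑ k ∈ Finset.range (n + 1), if 1 ≤ k ∧ ladderSquare n k ⊆ R then 1 else 0 := by
  have hsq : squaresWithin (ladderGraph n) R = ladderSquare n ''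
      ↑((Finset.range (n + 1)).filter fun k => 1 ≤ k ∧ ladderSquare n k ⊆ R) := by
    ext T
    simp only [squaresWithin, ladderGraph_nonempty_iso_cycleGraph_four_iff, Set.mem_image,
      Finset.coe_filter, Finset.mem_range, Set.mem_ofPred_eq]
    constructor
    · rintro ⟨hTR, k, hk, hkn, rfl⟩
      exact ⟨k, ⟨by omega, hk, hTR⟩, rfl⟩
    · rintro ⟨k, ⟨hkn, hk, hkR⟩, rfl⟩
      exact ⟨hkR, k, hk, by omega, rfl⟩
  have hinj : Set.InjOn (ladderSquare n) {k | k ≤ n} := by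
    intro j hj k hk hjk
    have hj' : (⟨2 * j + 1, by have : j ≤ n := hj; omega⟩ : Fin (2 * (n + 1))) ∈ ladderSquare n k :=
      hjk ▸ ⟨by dsimp only; omega, le_rfl⟩
    have hk' : (⟨2 * k + 1, by have : k ≤ n := hk; omega⟩ : Fin (2 * (n + 1))) ∈ ladderSquare n j :=
      hjk ▸ ⟨by dsimp only; omega, le_rfl⟩
    simp only [ladderSquare, Set.mem_ofPred_eq] at hj' hk'
    omega
  rw [hsq, (hinj.mono fun k hk =>
      Nat.lt_succ_iff.mp (Finset.mem_range.mp (Finset.mem_filter.mp hk).1)).ncard_image,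
    Set.ncard_coe_finset, Finset.card_filter]
  push_cast
  rfl

theorem Fin.subsingleton_of_forall_val_eq {N m : ℕ} {s : Set (Fin N)}
    (h : ∀ u ∈ s, (u : ℕ) = m) : s.Subsingleton :=
  fun _ hx _ hy => Fin.ext ((h _ hx).trans (h _ hy).symm)

theorem cycleRank_ladderGraph_insert_of_forall_lt {n k : ℕ} {R : Set (Fin (2 * (n + 1)))}
    {v : Fin (2 * (n + 1))} (hR : ∀ x ∈ R, (x : ℕ) < 2 * k)
    (hv : (v : ℕ) = 2 * k ∨ (v : ℕ) = 2 * k + 1) :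
    cycleRank (ladderGraph n) (insert v R) = cycleRank (ladderGraph n) R := by
  refine cycleRank_insert_of_subsingleton (fun hvR => by have := hR v hvR; omega) ?_
  refine Fin.subsingleton_of_forall_val_eq (m := v - 2) fun u ⟨hvu, huR⟩ => ?_
  have := hR u huR
  rw [mem_neighborSet, ladderGraph_adj] at hvu
  omega

theorem cycleRank_ladderGraph_insert_rung {n k : ℕ} {R : Set (Fin (2 * (n + 1)))}
    {a b : Fin (2 * (n + 1))} (hR : ∀ x ∈ R, (x : ℕ) < 2 * k) (ha : (a : ℕ) = 2 * k)
    (hb : (b : ℕ) = 2 * k + 1) :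
    cycleRank (ladderGraph n) (insert b (insert a R)) = cycleRank (ladderGraph n) R +
      if (∃ c ∈ R, (c : ℕ) + 2 = 2 * k) ∧ ∃ d ∈ R, (d : ℕ) + 1 = 2 * k then 1 else 0 := by
  have hbaR : b ∉ insert a R := by
    rintro (h | h)
    · rw [h] at hb; omega
    · have := hR b h; omega
  by_cases hc : ∃ c ∈ R, (c : ℕ) + 2 = 2 * k
  · have haR := cycleRank_ladderGraph_insert_of_forall_lt hR (Or.inl ha)
    by_cases hd : ∃ d ∈ R, (d : ℕ) + 1 = 2 * k
    · obtain ⟨c, hcR, hc⟩ := hc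
      obtain ⟨d, hdR, hd⟩ := hd
      rw [if_pos ⟨⟨c, hcR, hc⟩, d, hdR, hd⟩, ← haR]
      have hN : (ladderGraph n).neighborSet b ∩ insert a R = {a, d} := by
        ext u
        simp only [Set.mem_inter_iff, mem_neighborSet, Set.mem_insert_iff,
          Set.mem_singleton_iff]
        constructor
        · rintro ⟨hbu, rfl | huR⟩
          · exact Or.inl rfl
          · have := hR u huR
            rw [ladderGraph_adj] at hbu
            exact Or.inr (Fin.ext (by omega))
        · rintro (rfl | rfl)
          · exact ⟨ladderGraph_adj.mpr (by omega), Or.inl rfl⟩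
          · exact ⟨ladderGraph_adj.mpr (by omega), Or.inr hdR⟩
      have hcR' := Set.mem_insert_of_mem a hcR
      have hdc : ((ladderGraph n).induce (insert a R)).Adj ⟨d, Set.mem_insert_of_mem a hdR⟩
          ⟨c, hcR'⟩ := show (ladderGraph n).Adj d c from ladderGraph_adj.mpr (by omega)
      have hca : ((ladderGraph n).induce (insert a R)).Adj ⟨c, hcR'⟩ ⟨a, Set.mem_insert a R⟩ :=
        show (ladderGraph n).Adj c a from ladderGraph_adj.mpr (by omega)
      exact cycleRank_insert_of_reachable hbaR (by simp [Fin.ext_iff]; omega) hN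
        (hca.reachable.symm.trans hdc.reachable.symm)
    · rw [if_neg fun h => hd h.2, add_zero, ← haR]
      refine cycleRank_insert_of_subsingleton hbaR
        (Fin.subsingleton_of_forall_val_eq (m := 2 * k) fun u ⟨hbu, huR⟩ => ?_)
      rw [mem_neighborSet, ladderGraph_adj] at hbu
      rcases huR with rfl | huR
      · exact ha
      · have := hR u huR
        exact absurd ⟨u, huR, by omega⟩ hd
  -- Without `c`, the neighbours `a` and `d` of `b` would lie in different components of
  -- `insert a R`, so `b` goes in first.
  · rw [if_neg fun h => hc h.1, add_zero, Set.insert_comm,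
      ← cycleRank_ladderGraph_insert_of_forall_lt hR (Or.inr hb)]
    have habR : a ∉ insert b R := by
      rintro (h | h)
      · rw [h] at ha; omega
      · have := hR a h; omega
    refine cycleRank_insert_of_subsingleton habR
      (Fin.subsingleton_of_forall_val_eq (m := 2 * k + 1) fun u ⟨hau, huR⟩ => ?_)
    rw [mem_neighborSet, ladderGraph_adj] at hau
    rcases huR with rfl | huR
    · exact hb
    · have := hR u huR
      exact absurd ⟨u, huR, by omega⟩ hc

def rungPrefix {n : ℕ} (S : Set (Fin (2 * (n + 1)))) (k : ℕ) : Set (Fin (2 * (n + 1))) :=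
  {x ∈ S | (x : ℕ) < 2 * k}

theorem rungPrefix_succ {n k : ℕ} (S : Set (Fin (2 * (n + 1)))) {a b : Fin (2 * (n + 1))}
    (ha : (a : ℕ) = 2 * k) (hb : (b : ℕ) = 2 * k + 1) :
    rungPrefix S (k + 1) = rungPrefix S k ∪ (S ∩ {a, b}) := by
  ext x
  simp only [rungPrefix, Set.mem_union, Set.mem_inter_iff, Set.mem_sep_iff, Set.mem_insert_iff,
    Set.mem_singleton_iff, Fin.ext_iff, ha, hb]
  by_cases hx : x ∈ S <;> simp only [hx, true_and, false_and, false_or]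
  omega

theorem one_le_and_ladderSquare_subset_iff {n k : ℕ} {S : Set (Fin (2 * (n + 1)))}
    {a b : Fin (2 * (n + 1))} (ha : (a : ℕ) = 2 * k) (hb : (b : ℕ) = 2 * k + 1) :
    1 ≤ k ∧ ladderSquare n k ⊆ S ↔ a ∈ S ∧ b ∈ S ∧
      (∃ c ∈ rungPrefix S k, (c : ℕ) + 2 = 2 * k) ∧ ∃ d ∈ rungPrefix S k, (d : ℕ) + 1 = 2 * k := by
  constructor
  · rintro ⟨hk, hS⟩
    have mem : ∀ x : Fin (2 * (n + 1)), 2 * k ≤ (x : ℕ) + 2 → (x : ℕ) ≤ 2 * k + 1 → x ∈ S :=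
      fun x h₁ h₂ => hS ⟨h₁, h₂⟩
    have := b.isLt
    refine ⟨mem a (by omega) (by omega), mem b (by omega) (by omega),
      ⟨⟨2 * k - 2, by omega⟩, ⟨mem _ ?_ ?_, ?_⟩, ?_⟩,
      ⟨⟨2 * k - 1, by omega⟩, ⟨mem _ ?_ ?_, ?_⟩, ?_⟩⟩
    all_goals dsimp only; omega
  · rintro ⟨haS, hbS, ⟨c, ⟨hcS, -⟩, hc⟩, d, ⟨hdS, -⟩, hd⟩
    refine ⟨by omega, fun x ⟨hx₁, hx₂⟩ => ?_⟩
    obtain rfl | rfl | rfl | rfl : x = c ∨ x = d ∨ x = a ∨ x = b := by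
      simp only [Fin.ext_iff]
      omega
    exacts [hcS, hdS, haS, hbS]

theorem cycleRank_rungPrefix_succ {n k : ℕ} (S : Set (Fin (2 * (n + 1)))) (hk : k ≤ n) :
    cycleRank (ladderGraph n) (rungPrefix S (k + 1)) = cycleRank (ladderGraph n) (rungPrefix S k) +
      if 1 ≤ k ∧ ladderSquare n k ⊆ S then 1 else 0 := by
  let a : Fin (2 * (n + 1)) := ⟨2 * k, by omega⟩
  let b : Fin (2 * (n + 1)) := ⟨2 * k + 1, by omega⟩
  have hR : ∀ x ∈ rungPrefix S k, (x : ℕ) < 2 * k := fun _ hx => hx.2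
  rw [rungPrefix_succ S (a := a) (b := b) rfl rfl]
  simp only [one_le_and_ladderSquare_subset_iff (S := S) (a := a) (b := b) rfl rfl]
  by_cases haS : a ∈ S <;> by_cases hbS : b ∈ S
  · rw [Set.inter_eq_right.mpr (Set.insert_subset haS (Set.singleton_subset_iff.mpr hbS)),
      Set.union_insert, Set.union_singleton, Set.insert_comm,
      cycleRank_ladderGraph_insert_rung hR rfl rfl]
    simp only [haS, hbS, true_and]
  · rw [Set.inter_insert_of_mem haS, Set.inter_singleton_eq_empty.mpr hbS, Set.union_insert,
      Set.union_empty, cycleRank_ladderGraph_insert_of_forall_lt hR (Or.inl rfl)]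
    simp [hbS]
  · rw [Set.inter_insert_of_notMem haS, Set.inter_eq_right.mpr (Set.singleton_subset_iff.mpr hbS),
      Set.union_singleton, cycleRank_ladderGraph_insert_of_forall_lt hR (Or.inr rfl)]
    simp [haS]
  · rw [Set.inter_insert_of_notMem haS, Set.inter_singleton_eq_empty.mpr hbS, Set.union_empty]
    simp [haS]

theorem cycleRank_rungPrefix {n : ℕ} (S : Set (Fin (2 * (n + 1)))) :
    ∀ k ≤ n + 1, cycleRank (ladderGraph n) (rungPrefix S k) =
      ∑ j ∈ Finset.range k, if 1 ≤ j ∧ ladderSquare n j ⊆ S then 1 else 0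
  | 0, _ => by
    rw [Finset.sum_range_zero, show rungPrefix S 0 = ∅ from
      Set.eq_empty_of_forall_notMem fun x hx => Nat.not_lt_zero _ hx.2]
    exact cycleRank_empty
  | k + 1, hk => by
    rw [cycleRank_rungPrefix_succ S (by omega), Finset.sum_range_succ,
      cycleRank_rungPrefix S k (by omega)]

/-- For any induced subgraph `Γ'` of `Q_n` (given by its vertex set
`S`), one has `|E(Γ')| − d(Γ') + r(Γ') = q(Γ')`, where `q(Γ')` is the number of
subsquares (induced 4-cycles) of `Γ'`. -/
theorem stmt5 (n : ℕ) (S : Set (Fin (2 * (n + 1)))) :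
    (Set.ncard {e : Sym2 (Fin (2 * (n + 1))) |
        e ∈ (ladderGraph n).edgeSet ∧ ∀ v ∈ e, v ∈ S} : ℤ)
      - S.ncard
      + Nat.card ((ladderGraph n).induce S).ConnectedComponent
      = Nat.card {T : Set (Fin (2 * (n + 1))) // T ⊆ S ∧
          Nonempty ((ladderGraph n).induce T ≃g SimpleGraph.cycleGraph 4)} := by
  have hS : rungPrefix S (n + 1) = S := Set.sep_eq_self_iff_mem_true.mpr fun x _ => x.isLt
  calc cycleRank (ladderGraph n) S
      = cycleRank (ladderGraph n) (rungPrefix S (n + 1)) := by rw [hS]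
    _ = (squaresWithin (ladderGraph n) S).ncard := by
      rw [cycleRank_rungPrefix S (n + 1) le_rfl, ncard_squaresWithin_ladderGraph]
    _ = _ := by rw [← Nat.card_coe_set_eq]; rfl
end

section
/- A finite simplicial graph is chordal (contains no induced cycle of length ≥ 4) if and only if it can be constructed recursively by pasting along complete subgraphs, starting from complete simplicial graphs. -/
/-- Induced subgraphs (given by their vertex sets) of an ambient graph `G` that can
be constructed recursively by pasting two proper induced subgraphs along a common
complete subgraph (a clique), starting from complete graphs. -/
inductive CliquePastingConstructible {V : Type*} (G : SimpleGraph V) : Set V → Prop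
  | complete (S : Set V) (h : G.IsClique S) : CliquePastingConstructible G S
  | paste (S₁ S₂ : Set V)
      (h₁ : CliquePastingConstructible G S₁) (h₂ : CliquePastingConstructible G S₂)
      (hproper₁ : S₁ ≠ S₁ ∪ S₂) (hproper₂ : S₂ ≠ S₁ ∪ S₂)
      (hclique : G.IsClique (S₁ ∩ S₂))
      (hcross : ∀ a ∈ S₁ \ S₂, ∀ b ∈ S₂ \ S₁, ¬ G.Adj a b) :
      CliquePastingConstructible G (S₁ ∪ S₂)

/-!
Going around a cycle whose vertices are covered by `S₁` and `S₂`, with both `S₁ \ S₂` and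
`S₂ \ S₁` met, some vertex of `S₁ ∩ S₂` is preceded by a vertex of `S₁ \ S₂` and some by a vertex
of `S₂ \ S₁`. If the cycle has no edges between `S₁ \ S₂` and `S₂ \ S₁`, these two vertices of
`S₁ ∩ S₂` are neither equal nor adjacent, so `S₁ ∩ S₂` is not a clique. Hence an induced cycle of
length `≥ 4` in a graph pasted along a clique lies in one of the two pieces, and by induction
constructible graphs are chordal.

Conversely, let `G` be chordal and let `a, b` be non-adjacent vertices of `S`. Let `A` be the
component of `a` among the vertices of `S` not adjacent to `b`, and `C` the set of vertices of
`S \ A` with a neighbour in `A`. Then `S` is the pasting of `A ∪ C` and `S \ A` along `C`, and `C`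
is a clique: two non-adjacent `u, v ∈ C` are joined by a shortest path through `A`, which closes
with `b` to an induced cycle of length `≥ 4`.
-/

namespace Fin

lemma exists_mem_add_one_notMem {n : ℕ} {P : Set (Fin (n + 1))} {a b : Fin (n + 1)}
    (ha : a ∈ P) (hb : b ∉ P) : ∃ z ∈ P, z + 1 ∉ P := by
  by_contra! h
  have hadd : ∀ c, a + c ∈ P := Fin.induction (by simpa using ha) fun c hc => by
    rw [← Fin.coeSucc_eq_succ, ← add_assoc]
    exact h _ hc
  exact hb (by simpa using hadd (b - a))

end Fin

namespace SimpleGraph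

variable {V W : Type*} {G : SimpleGraph V}

def IsChordal (G : SimpleGraph V) : Prop := ∀ m, 4 ≤ m → ¬ cycleGraph m ⊴ G

def IsCliqueSeparation (G : SimpleGraph V) (S₁ S₂ : Set V) : Prop :=
  G.IsClique (S₁ ∩ S₂) ∧ ∀ a ∈ S₁ \ S₂, ∀ b ∈ S₂ \ S₁, ¬ G.Adj a b

lemma IsCliqueSeparation.symm {S₁ S₂ : Set V} (h : G.IsCliqueSeparation S₁ S₂) :
    G.IsCliqueSeparation S₂ S₁ :=
  ⟨Set.inter_comm S₁ S₂ ▸ h.1, fun _ ha _ hb hab => h.2 _ hb _ ha hab.symm⟩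

lemma IsClique.comap {H : SimpleGraph W} (f : H ↪g G) {S : Set V} (h : G.IsClique S) :
    H.IsClique (f ⁻¹' S) :=
  fun _ hi _ hj hij => f.map_adj_iff.mp (h hi hj (f.injective.ne hij))

lemma IsCliqueSeparation.comap {H : SimpleGraph W} (f : H ↪g G) {S₁ S₂ : Set V}
    (h : G.IsCliqueSeparation S₁ S₂) : H.IsCliqueSeparation (f ⁻¹' S₁) (f ⁻¹' S₂) :=
  ⟨h.1.comap f, fun _ ha _ hb hab => h.2 _ ha _ hb (f.map_adj_iff.mpr hab)⟩

lemma cycleGraph_adj_iff_val {n : ℕ} {i j : Fin (n + 2)} :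
    (cycleGraph (n + 2)).Adj i j ↔ i.val + 1 = j.val ∨ j.val + 1 = i.val ∨
      (i.val = 0 ∧ j.val = n + 1) ∨ (j.val = 0 ∧ i.val = n + 1) := by
  rw [cycleGraph_adj, sub_eq_iff_eq_add', sub_eq_iff_eq_add', Fin.ext_iff, Fin.ext_iff,
    Fin.val_add_one, Fin.val_add_one]
  split_ifs <;> simp only [Fin.ext_iff, Fin.val_last] at * <;> omega

lemma cycleGraph_adj_castSucc {n : ℕ} {i j : Fin (n + 1)} :
    (cycleGraph (n + 2)).Adj i.castSucc j.castSucc ↔ (pathGraph (n + 1)).Adj i j := by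
  rw [cycleGraph_adj_iff_val, pathGraph_adj, Fin.val_castSucc, Fin.val_castSucc]
  omega

lemma cycleGraph_adj_last_castSucc {n : ℕ} {i : Fin (n + 1)} :
    (cycleGraph (n + 2)).Adj (Fin.last (n + 1)) i.castSucc ↔ i = 0 ∨ i = Fin.last n := by
  rw [cycleGraph_adj_iff_val, Fin.val_castSucc, Fin.val_last, Fin.ext_iff, Fin.ext_iff,
    Fin.val_last, Fin.val_zero]
  omega

lemma cycleGraph_not_isClique_univ {m : ℕ} (hm : 4 ≤ m) :
    ¬ (cycleGraph m).IsClique Set.univ := by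
  obtain ⟨n, rfl⟩ : ∃ n, m = n + 2 := ⟨m - 2, by omega⟩
  intro h
  have := h (Set.mem_univ ⟨0, by omega⟩) (Set.mem_univ ⟨2, by omega⟩) (by simp [Fin.ext_iff])
  simp only [cycleGraph_adj_iff_val] at this
  omega

lemma exists_mem_diff_add_one_mem_inter {n : ℕ} {A B : Set (Fin (n + 2))}
    (hAB : A ∪ B = Set.univ) (hsep : (cycleGraph (n + 2)).IsCliqueSeparation A B)
    {a b : Fin (n + 2)} (ha : a ∈ A \ B) (hb : b ∉ A) : ∃ z ∈ A \ B, z + 1 ∈ A ∩ B := by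
  obtain ⟨z, hz, hz'⟩ := Fin.exists_mem_add_one_notMem ha (fun h => hb h.1)
  have hadj : (cycleGraph (n + 2)).Adj z (z + 1) := by simp [cycleGraph_adj]
  have hzA : z + 1 ∈ A := by
    by_contra hA
    have hB : z + 1 ∈ B := (Set.eq_univ_iff_forall.mp hAB (z + 1)).resolve_left hA
    exact hsep.2 z hz (z + 1) ⟨hB, hA⟩ hadj
  exact ⟨z, hz, hzA, by_contra fun hB => hz' ⟨hzA, hB⟩⟩

theorem cycleGraph_eq_univ_or_eq_univ {n : ℕ} {A B : Set (Fin (n + 2))}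
    (hAB : A ∪ B = Set.univ) (hsep : (cycleGraph (n + 2)).IsCliqueSeparation A B) :
    A = Set.univ ∨ B = Set.univ := by
  by_contra! h
  obtain ⟨a, ha⟩ := (Set.ne_univ_iff_exists_notMem B).mp h.2
  obtain ⟨b, hb⟩ := (Set.ne_univ_iff_exists_notMem A).mp h.1
  have hcover : ∀ x, x ∈ A ∨ x ∈ B := Set.eq_univ_iff_forall.mp hAB
  obtain ⟨z₁, hz₁, hz₁'⟩ :=
    exists_mem_diff_add_one_mem_inter hAB hsep ⟨(hcover a).resolve_right ha, ha⟩ hb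
  obtain ⟨z₂, hz₂, hz₂'⟩ := exists_mem_diff_add_one_mem_inter (Set.union_comm A B ▸ hAB)
    hsep.symm ⟨(hcover b).resolve_left hb, hb⟩ ha
  by_cases heq : z₁ + 1 = z₂ + 1
  · exact hz₂.2 (add_right_cancel heq ▸ hz₁.1)
  rcases cycleGraph_adj.mp (hsep.1 hz₁' ⟨hz₂'.2, hz₂'.1⟩ heq) with h | h
  · rw [add_sub_add_right_eq_sub, sub_eq_iff_eq_add'] at h
    exact hz₁.2 (h ▸ hz₂'.1)
  · rw [add_sub_add_right_eq_sub, sub_eq_iff_eq_add'] at h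
    exact hz₂.2 (h ▸ hz₁'.1)

theorem _root_.CliquePastingConstructible.not_range_subset {S : Set V}
    (hS : CliquePastingConstructible G S) {m : ℕ} (hm : 4 ≤ m) (f : cycleGraph m ↪g G) :
    ¬ Set.range f ⊆ S := by
  have preimage_eq_univ : ∀ {T : Set V}, Set.range f ⊆ T → f ⁻¹' T = Set.univ :=
    fun hT => Set.eq_univ_of_forall fun i => hT ⟨i, rfl⟩
  induction hS with
  | complete S hS =>
    exact fun hf => cycleGraph_not_isClique_univ hm (preimage_eq_univ hf ▸ hS.comap f)
  | paste S₁ S₂ _ _ _ _ hclique hcross ih₁ ih₂ =>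
    intro hf
    obtain ⟨n, rfl⟩ : ∃ n, m = n + 2 := ⟨m - 2, by omega⟩
    rcases cycleGraph_eq_univ_or_eq_univ (preimage_eq_univ hf)
      (IsCliqueSeparation.comap f ⟨hclique, hcross⟩) with h | h
    · exact ih₁ (Set.range_subset_iff.mpr (Set.eq_univ_iff_forall.mp h))
    · exact ih₂ (Set.range_subset_iff.mpr (Set.eq_univ_iff_forall.mp h))

theorem isChordal_of_cliquePastingConstructible_univ
    (h : CliquePastingConstructible G Set.univ) : G.IsChordal :=
  fun _ hm ⟨f⟩ => h.not_range_subset hm f (Set.subset_univ _)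

theorem isIndContained_cycleGraph_of_apex {n : ℕ} (f : pathGraph (n + 1) ↪g G) {b : V}
    (hb : b ∉ Set.range f) (hadj : ∀ i, G.Adj b (f i) ↔ i = 0 ∨ i = Fin.last n) :
    cycleGraph (n + 2) ⊴ G := by
  let g : Fin (n + 2) → V := Fin.lastCases b f
  have g_last : g (Fin.last _) = b := Fin.lastCases_last
  have g_castSucc : ∀ i, g i.castSucc = f i := Fin.lastCases_castSucc
  refine ⟨⟨⟨g, fun i j hij => ?_⟩, fun {i j} => ?_⟩⟩
  · induction i using Fin.lastCases <;> induction j using Fin.lastCases <;>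
      simp only [g_last, g_castSucc] at hij
    · rfl
    · exact (hb ⟨_, hij.symm⟩).elim
    · exact (hb ⟨_, hij⟩).elim
    · rw [f.injective hij]
  · change G.Adj (g i) (g j) ↔ _
    induction i using Fin.lastCases <;> induction j using Fin.lastCases <;>
      simp only [g_last, g_castSucc]
    · simp
    · rw [hadj, cycleGraph_adj_last_castSucc]
    · rw [G.adj_comm, hadj, (cycleGraph _).adj_comm, cycleGraph_adj_last_castSucc]
    · rw [f.map_adj_iff, cycleGraph_adj_castSucc]

namespace Walk

variable {u v : V}

lemma dist_le_add_length_add (p : G.Walk u v) {i j : ℕ} (hij : i ≤ j) (hj : j ≤ p.length)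
    (q : G.Walk (p.getVert i) (p.getVert j)) : G.dist u v ≤ i + q.length + (p.length - j) := by
  calc G.dist u v ≤ ((p.take i).append (q.append (p.drop j))).length := dist_le _
    _ = i + q.length + (p.length - j) := by
      simp only [length_append, take_length, drop_length]
      omega

lemma eq_add_one_of_adj_getVert (p : G.Walk u v) (hp : p.length = G.dist u v) {i j : ℕ}
    (hij : i ≤ j) (hj : j ≤ p.length) (hadj : G.Adj (p.getVert i) (p.getVert j)) :
    j = i + 1 := by
  have hne : i ≠ j := by rintro rfl; exact G.irrefl hadj
  have := p.dist_le_add_length_add hij hj hadj.toWalk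
  rw [Adj.length_toWalk] at this
  omega

def toPathGraph (p : G.Walk u v) (hp : p.length = G.dist u v) :
    pathGraph (p.length + 1) ↪g G where
  toFun i := p.getVert i
  inj' i j h := Fin.ext <| (p.isPath_of_length_eq_dist hp).getVert_injOn
    (Nat.lt_succ_iff.mp i.isLt) (Nat.lt_succ_iff.mp j.isLt) h
  map_rel_iff' {i j} := by
    change G.Adj (p.getVert i) (p.getVert j) ↔ _
    rw [pathGraph_adj]
    constructor
    · intro hadj
      rcases le_total i.val j.val with h | h
      · exact .inl (p.eq_add_one_of_adj_getVert hp h (by omega) hadj).symm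
      · exact .inr (p.eq_add_one_of_adj_getVert hp h (by omega) hadj.symm).symm
    · rintro (h | h)
      · exact h ▸ p.adj_getVert_succ (by omega)
      · exact h ▸ (p.adj_getVert_succ (by omega)).symm

end Walk

theorem exists_isIndContained_cycleGraph_of_induce_connected {T : Set V}
    (hT : (G.induce T).Connected) {u v b : V} (hu : u ∈ T) (hv : v ∈ T) (huv : u ≠ v)
    (hnadj : ¬ G.Adj u v) (hbT : b ∉ T) (hbu : G.Adj b u) (hbv : G.Adj b v)
    (hb : ∀ x ∈ T, x ≠ u → x ≠ v → ¬ G.Adj b x) : ∃ m, 4 ≤ m ∧ cycleGraph m ⊴ G := by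
  obtain ⟨p, hp⟩ := hT.exists_walk_length_eq_dist ⟨u, hu⟩ ⟨v, hv⟩
  have hlen : 2 ≤ p.length := by
    have h₀ : p.length ≠ 0 := hp ▸ dist_ne_zero_iff_ne_and_reachable.mpr
      ⟨fun h => huv (congrArg Subtype.val h), hT.preconnected _ _⟩
    have h₁ : p.length ≠ 1 := by
      rw [hp]
      exact fun h => hnadj ((dist_eq_one_iff_adj (G := G.induce T)).mp h)
    omega
  let f := (Embedding.induce T).comp (p.toPathGraph hp)
  have hfT : ∀ i, f i ∈ T := fun i => (p.getVert i).2
  have hf₀ : f 0 = u := congrArg Subtype.val p.getVert_zero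
  have hf_last : f (Fin.last _) = v := congrArg Subtype.val p.getVert_length
  refine ⟨p.length + 2, by omega,
    isIndContained_cycleGraph_of_apex f (b := b) ?_ fun i => ⟨fun h => ?_, ?_⟩⟩
  · rintro ⟨i, rfl⟩
    exact hbT (hfT i)
  · by_contra! hi
    exact hb _ (hfT i) (fun h₀ => hi.1 (f.injective (h₀.trans hf₀.symm)))
      (fun h_last => hi.2 (f.injective (h_last.trans hf_last.symm))) h
  · rintro (rfl | rfl)
    · rwa [hf₀]
    · rwa [hf_last]

lemma induce_singleton_connected (x : V) : (G.induce {x}).Connected := by simp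

lemma exists_induce_connected_component {U : Set V} {a : V} (ha : a ∈ U) :
    ∃ A ⊆ U, a ∈ A ∧ (G.induce A).Connected ∧ ∀ y ∈ A, ∀ x ∈ U, G.Adj y x → x ∈ A := by
  let 𝒜 : Set (Set V) := {s | s ⊆ U ∧ a ∈ s ∧ (G.induce s).Connected}
  have ha𝒜 : {a} ∈ 𝒜 := ⟨Set.singleton_subset_iff.mpr ha, rfl, induce_singleton_connected a⟩
  refine ⟨⋃₀ 𝒜, Set.sUnion_subset fun s hs => hs.1, ⟨{a}, ha𝒜, rfl⟩,
    induce_sUnion_connected_of_pairwise_not_disjoint ⟨_, ha𝒜⟩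
      (fun hs ht => ⟨a, hs.2.1, ht.2.1⟩) fun hs => hs.2.2, ?_⟩
  rintro y ⟨s, hs, hy⟩ x hx hyx
  refine ⟨s ∪ {x}, ⟨Set.union_subset hs.1 (Set.singleton_subset_iff.mpr hx), .inl hs.2.1,
    connected_induce_union hs.2.2.preconnected (induce_singleton_connected x).preconnected
      hy rfl hyx⟩, .inr rfl⟩

theorem IsChordal.isClique_of_induce_connected (hG : G.IsChordal) {A : Set V}
    (hA : (G.induce A).Connected) {b : V} (hbA : b ∉ A) (hb : ∀ x ∈ A, ¬ G.Adj b x) :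
    G.IsClique {x | x ∉ A ∧ G.Adj b x ∧ ∃ y ∈ A, G.Adj x y} := by
  rintro u ⟨huA, hbu, yu, hyu, huyu⟩ v ⟨hvA, hbv, yv, hyv, hvyv⟩ huv
  by_contra hnadj
  have hT : (G.induce (A ∪ {u} ∪ {v})).Connected :=
    connected_induce_union (connected_induce_union hA.preconnected
      (induce_singleton_connected u).preconnected hyu rfl huyu.symm).preconnected
      (induce_singleton_connected v).preconnected (.inl hyv) rfl hvyv.symm
  have hbT : b ∉ A ∪ {u} ∪ {v} := by
    rintro ((h | rfl) | rfl)
    · exact hbA h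
    · exact G.irrefl hbu
    · exact G.irrefl hbv
  obtain ⟨m, hm, hcycle⟩ := exists_isIndContained_cycleGraph_of_induce_connected hT
    (.inl (.inr rfl)) (.inr rfl) huv hnadj hbT hbu hbv
    fun x hx hxu hxv => hb x ((hx.resolve_right hxv).resolve_right hxu)
  exact hG m hm hcycle

theorem IsChordal.exists_isCliqueSeparation (hG : G.IsChordal) {S : Set V}
    (hS : ¬ G.IsClique S) :
    ∃ S₁ S₂, S₁ ∪ S₂ = S ∧ S₁ ⊂ S ∧ S₂ ⊂ S ∧ G.IsCliqueSeparation S₁ S₂ := by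
  obtain ⟨a, ha, b, hb, hab, hnadj⟩ : ∃ a ∈ S, ∃ b ∈ S, a ≠ b ∧ ¬ G.Adj a b := by
    simpa [isClique_iff, Set.Pairwise] using hS
  let W := {x | x ∈ S ∧ x ≠ b ∧ ¬ G.Adj b x}
  obtain ⟨A, hAW, haA, hA, hA_closed⟩ :=
    exists_induce_connected_component (G := G) (U := W) ⟨ha, hab, fun h => hnadj h.symm⟩
  have hAS : A ⊆ S := fun x hx => (hAW hx).1
  have hbA : b ∉ A := fun h => (hAW h).2.1 rfl
  let C := {x | x ∈ S ∧ x ∉ A ∧ ∃ y ∈ A, G.Adj x y}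
  have hCS : C ⊆ S := fun x hx => hx.1
  have hCb : ∀ x ∈ C, G.Adj b x := by
    rintro x ⟨hxS, hxA, y, hy, hxy⟩
    by_contra hbx
    have hxb : x ≠ b := by rintro rfl; exact (hAW hy).2.2 hxy
    exact hxA (hA_closed y hy x ⟨hxS, hxb, hbx⟩ hxy.symm)
  have hC : G.IsClique C :=
    (hG.isClique_of_induce_connected hA hbA fun x hx => (hAW hx).2.2).subset
      fun x hx => by exact ⟨hx.2.1, hCb x hx, hx.2.2⟩
  refine ⟨A ∪ C, S \ A, Set.union_sdiff_cancel' Set.subset_union_left (Set.union_subset hAS hCS),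
    (Set.ssubset_iff_of_subset (Set.union_subset hAS hCS)).mpr
      ⟨b, hb, fun h => h.elim hbA fun hbC => G.irrefl (hCb b hbC)⟩,
    (Set.ssubset_iff_of_subset Set.sdiff_subset).mpr ⟨a, ha, fun h => h.2 haA⟩,
    hC.subset fun x hx => hx.1.resolve_left hx.2.2, ?_⟩
  rintro x ⟨hx, hxS⟩ y ⟨⟨hyS, hyA⟩, hyC⟩ hxy
  have hxA : x ∈ A := hx.elim id fun hxC => (hxS ⟨hxC.1, hxC.2.1⟩).elim
  exact hyC (.inr ⟨hyS, hyA, x, hxA, hxy.symm⟩)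

theorem IsChordal.cliquePastingConstructible [Finite V] (hG : G.IsChordal) (S : Set V) :
    CliquePastingConstructible G S := by
  induction S using WellFoundedLT.induction with
  | _ S ih =>
    by_cases hS : G.IsClique S
    · exact .complete S hS
    obtain ⟨S₁, S₂, rfl, h₁, h₂, hsep⟩ := hG.exists_isCliqueSeparation hS
    exact .paste S₁ S₂ (ih S₁ h₁) (ih S₂ h₂) h₁.ne h₂.ne hsep.1 hsep.2

theorem isChordal_iff_forall_isEmpty_iso_induce :
    G.IsChordal ↔ ∀ m, 4 ≤ m → ∀ S : Set V, IsEmpty (G.induce S ≃g cycleGraph m) := by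
  simp only [IsChordal, isIndContained_iff_exists_iso_induce, not_exists, not_nonempty_iff]
  exact forall₂_congr fun _ _ => forall_congr' fun _ =>
    ⟨fun h => ⟨fun e => h.false e.symm⟩, fun h => ⟨fun e => h.false e.symm⟩⟩

end SimpleGraph

/-- A finite simplicial graph is chordal (has no induced cycle of
length ≥ 4) if and only if it can be constructed recursively by pasting along
complete subgraphs, starting from complete simplicial graphs. -/
theorem stmt10 {V : Type*} [Fintype V] (Γ : SimpleGraph V) :
    (∀ m : ℕ, 4 ≤ m → ∀ S : Set V,
        IsEmpty (Γ.induce S ≃g SimpleGraph.cycleGraph m)) ↔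
      CliquePastingConstructible Γ Set.univ := by
  rw [← SimpleGraph.isChordal_iff_forall_isEmpty_iso_induce]
  exact ⟨fun h => h.cliquePastingConstructible _,
    SimpleGraph.isChordal_of_cliquePastingConstructible_univ⟩
end

section
/- Let G be a pro-p group, H a closed subgroup, and suppose every open subgroup of G containing H is of p-absolute Galois type. If for every nonzero α ∈ H^1(H, Z/p) with N = Ker(α), every element β ∈ Ker(res^2_{H,N}) is the restriction of a class β_U ∈ H^2(U,Z/p) from some open subgroup U ⊇ H with res^2_{U,Ker(α_U)}(β_U) = 0 and α_U|_H = α, then β lies in the image of the cup product map c_α: H^1(H,Z/p) → H^2(H,Z/p). In particular, using that H^n(H,Z/p) = colim_{U ⊇ H open} H^n(U,Z/p), the sequence H^1(H) → H^2(H) → H^2(N) given by cup product with α and restriction is exact at H^2(H). -/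
theorem LinearMap.map_mem_range_of_comm {R M₁ M₂ N₁ N₂ : Type*} [Semiring R]
    [AddCommMonoid M₁] [Module R M₁] [AddCommMonoid M₂] [Module R M₂]
    [AddCommMonoid N₁] [Module R N₁] [AddCommMonoid N₂] [Module R N₂]
    {f : M₁ →ₗ[R] M₂} {g : N₁ →ₗ[R] N₂} {r₁ : M₁ →ₗ[R] N₁} {r₂ : M₂ →ₗ[R] N₂}
    (hcomm : ∀ x, r₂ (f x) = g (r₁ x)) {y : M₂} (hy : y ∈ LinearMap.range f) :
    r₂ y ∈ LinearMap.range g := by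
  obtain ⟨x, rfl⟩ := hy
  exact ⟨r₁ x, (hcomm x).symm⟩

theorem stmt16_general (p : ℕ)
    (A₁ A₂ B₂ : Type*)
    [AddCommGroup A₁] [Module (ZMod p) A₁] [AddCommGroup A₂] [Module (ZMod p) A₂]
    [AddCommGroup B₂] [Module (ZMod p) B₂]
    (c : A₁ →ₗ[ZMod p] A₂) (res : A₂ →ₗ[ZMod p] B₂)
    (ι : Type*)
    (A₁U A₂U B₂U : ι → Type*)
    [∀ u, AddCommGroup (A₁U u)] [∀ u, Module (ZMod p) (A₁U u)]
    [∀ u, AddCommGroup (A₂U u)] [∀ u, Module (ZMod p) (A₂U u)]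
    [∀ u, AddCommGroup (B₂U u)] [∀ u, Module (ZMod p) (B₂U u)]
    (cU : ∀ u, A₁U u →ₗ[ZMod p] A₂U u)
    (resU : ∀ u, A₂U u →ₗ[ZMod p] B₂U u)
    (r₁ : ∀ u, A₁U u →ₗ[ZMod p] A₁)
    (r₂ : ∀ u, A₂U u →ₗ[ZMod p] A₂)
    -- restriction commutes with cup product by `α_U` (since `α_U|_H = α`):
    (hsq₁ : ∀ u (x : A₁U u), r₂ u (cU u x) = c (r₁ u x))
    -- every open `U ⊇ H` is of `p`-absolute Galois type (exactness at `H²(U)`):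
    (hU : ∀ u, LinearMap.range (cU u) = LinearMap.ker (resU u))
    -- the sequence for `H` is a complex:
    (hcomplex : ∀ x : A₁, res (c x) = 0)
    -- every class in `Ker(res)` comes from some `U` with vanishing restriction:
    (hcolim₂ : ∀ β : A₂, res β = 0 → ∃ u : ι, ∃ βU : A₂U u, r₂ u βU = β ∧ resU u βU = 0) :
    (∀ β : A₂, res β = 0 → ∃ γ : A₁, c γ = β) ∧
    LinearMap.range c = LinearMap.ker res := by
  have hker : LinearMap.ker res ≤ LinearMap.range c := by
    intro β hβ
    obtain ⟨u, βU, rfl, hβU⟩ := hcolim₂ β hβ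
    exact LinearMap.map_mem_range_of_comm (hsq₁ u) ((hU u).ge hβU)
  have hrange : LinearMap.range c ≤ LinearMap.ker res := by
    rintro _ ⟨x, rfl⟩
    exact hcomplex x
  exact ⟨fun β hβ => hker hβ, le_antisymm hrange hker⟩

/-- Let `H` be a closed subgroup of a pro-`p` group `G` such that
every open subgroup `U ⊇ H` is of `p`-absolute Galois type.  Fix a nonzero
`α ∈ H¹(H,ℤ/p)` with `N = Ker α`.  We model the relevant cohomology by linear data:
`A₁ = H¹(H)`, `A₂ = H²(H)`, `B₂ = H²(N)`, with `c = (− ∪ α) : A₁ → A₂` and the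
restriction `res : A₂ → B₂`; and for each open subgroup `U ⊇ H` (indexed by `ι`)
spaces `A₁ᵤ = H¹(U)`, `A₂ᵤ = H²(U)`, `B₂ᵤ = H²(Ker α_U)` with cup `cᵤ = (− ∪ α_U)`,
restriction `resᵤ`, and restriction-to-`H` maps `r₁ᵤ, r₂ᵤ, r₂Nᵤ` making the evident
squares commute (restriction commutes with cup products, using `α_U|_H = α`).
Assume each `U` is of `p`-absolute Galois type at `α_U` (`range cᵤ = ker resᵤ`),
that the sequence for `H` is a complex, that `H¹(H) = colim_U H¹(U)`
(every element of `A₁` is a restriction from some `U`), and that every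
`β ∈ Ker(res)` is restricted from some class `β_U ∈ H²(U)` with `resᵤ β_U = 0`.
Then every `β ∈ Ker(res)` lies in `Img(c_α)`; in particular the sequence
`H¹(H) → H²(H) → H²(N)` is exact at `H²(H)`. -/
theorem stmt16 (p : ℕ) [Fact p.Prime]
    (A₁ A₂ B₂ : Type*)
    [AddCommGroup A₁] [Module (ZMod p) A₁] [AddCommGroup A₂] [Module (ZMod p) A₂]
    [AddCommGroup B₂] [Module (ZMod p) B₂]
    (c : A₁ →ₗ[ZMod p] A₂) (res : A₂ →ₗ[ZMod p] B₂)
    (ι : Type*)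
    (A₁U A₂U B₂U : ι → Type*)
    [∀ u, AddCommGroup (A₁U u)] [∀ u, Module (ZMod p) (A₁U u)]
    [∀ u, AddCommGroup (A₂U u)] [∀ u, Module (ZMod p) (A₂U u)]
    [∀ u, AddCommGroup (B₂U u)] [∀ u, Module (ZMod p) (B₂U u)]
    (cU : ∀ u, A₁U u →ₗ[ZMod p] A₂U u)
    (resU : ∀ u, A₂U u →ₗ[ZMod p] B₂U u)
    (r₁ : ∀ u, A₁U u →ₗ[ZMod p] A₁)
    (r₂ : ∀ u, A₂U u →ₗ[ZMod p] A₂)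
    (r₂N : ∀ u, B₂U u →ₗ[ZMod p] B₂)
    -- restriction commutes with cup product by `α_U` (since `α_U|_H = α`):
    (hsq₁ : ∀ u (x : A₁U u), r₂ u (cU u x) = c (r₁ u x))
    -- restriction to `N` commutes with restriction to `H`:
    (hsq₂ : ∀ u (y : A₂U u), r₂N u (resU u y) = res (r₂ u y))
    -- every open `U ⊇ H` is of `p`-absolute Galois type (exactness at `H²(U)`):
    (hU : ∀ u, LinearMap.range (cU u) = LinearMap.ker (resU u))
    -- the sequence for `H` is a complex:
    (hcomplex : ∀ x : A₁, res (c x) = 0)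
    -- `H¹(H) = colim_U H¹(U)`:
    (hcolim₁ : ∀ a : A₁, ∃ u : ι, ∃ a' : A₁U u, r₁ u a' = a)
    -- every class in `Ker(res)` comes from some `U` with vanishing restriction:
    (hcolim₂ : ∀ β : A₂, res β = 0 → ∃ u : ι, ∃ βU : A₂U u, r₂ u βU = β ∧ resU u βU = 0) :
    (∀ β : A₂, res β = 0 → ∃ γ : A₁, c γ = β) ∧
    LinearMap.range c = LinearMap.ker res :=
  stmt16_general p A₁ A₂ B₂ c res ι A₁U A₂U B₂U cU resU r₁ r₂ hsq₁ hU hcomplex hcolim₂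
end
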